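/- arXiv:2110.07409 — 13 statements merged into one kernel-verified Lean document; each statement's English description precedes it below -/
import Mathlib

section
/- Let n ≥ 1 and let A, B be n×n real matrices with A invertible such that A⁻¹B is a symmetric matrix. Then the univariate polynomial p(t) = det(A + t·B) has degree exactly rank(B). -/
/-!
Writing `B = A M` with `M = A⁻¹ B` gives `det (A + t B) = det A · det (1 + t M)`. The symmetric
matrix `M` is orthogonally diagonalizable, `M = U D Uᵀ`, and `det (1 + t M)` is invariant under
this conjugation, so it equals `∏ i, (1 + λᵢ t)`. Its degree is the number of nonzero
eigenvalues `λᵢ`, which is `rank M = rank B`.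
-/

open Polynomial Matrix

section CommRing

variable {n R : Type*} [Fintype n] [DecidableEq n] [CommRing R]

theorem det_map_C_add_X_smul_map_C_mul (A M : Matrix n n R) :
    (A.map C + (X : R[X]) • (A * M).map C).det = C A.det * (1 + (X : R[X]) • M.map C).det := by
  rw [Matrix.map_mul, ← Matrix.mul_smul, ← mul_one (A.map C), mul_assoc, ← mul_add, one_mul,
    det_mul, RingHom.map_det]
  rfl

theorem det_one_add_X_smul_map_C_conj (P D Q : Matrix n n R) (hQP : Q * P = 1) :
    (1 + (X : R[X]) • (P * D * Q).map C).det = (1 + (X : R[X]) • D.map C).det := by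
  rw [Matrix.map_mul, ← Matrix.smul_mul, det_one_add_mul_comm, Matrix.mul_smul, Matrix.map_mul,
    ← mul_assoc, ← Matrix.map_mul, hQP, Matrix.map_one C (map_zero C) (map_one C), one_mul]

theorem det_one_add_X_smul_map_C_diagonal (d : n → R) :
    (1 + (X : R[X]) • (diagonal d).map C).det = ∏ i, (1 + C (d i) * X) := by
  rw [diagonal_map (map_zero C), ← diagonal_smul, ← diagonal_one, diagonal_add, det_diagonal]
  simp only [Pi.smul_apply, smul_eq_mul, mul_comm]

end CommRing

theorem degree_prod_one_add_C_mul_X {ι R : Type*} [Fintype ι] [CommRing R] [IsDomain R]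
    [DecidableEq R] (d : ι → R) :
    (∏ i, (1 + C (d i) * X)).degree = (Fintype.card {i // d i ≠ 0} : WithBot ℕ) := by
  have hfactor (i : ι) :
      (1 + C (d i) * X).degree = ((if d i = 0 then 0 else 1 : ℕ) : WithBot ℕ) := by
    by_cases h : d i = 0
    · simp [h]
    · rw [if_neg h, add_comm, ← C_1, degree_linear h]
      rfl
  rw [degree_prod, Finset.sum_congr rfl fun i _ => hfactor i]
  norm_cast
  simp [Finset.sum_ite, Fintype.card_subtype]

theorem Matrix.IsHermitian.degree_det_one_add_X_smul_map_C {n : Type*} [Fintype n]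
    [DecidableEq n] {M : Matrix n n ℝ} (hM : M.IsHermitian) :
    (1 + (X : ℝ[X]) • M.map C).det.degree = M.rank := by
  set U : Matrix n n ℝ := (hM.eigenvectorUnitary : Matrix n n ℝ)
  have hspec : M = U * diagonal hM.eigenvalues * star U := by
    simpa [RCLike.ofReal_real_eq_id] using hM.spectral_theorem
  have hUU : star U * U = 1 := Unitary.star_mul_self_of_mem hM.eigenvectorUnitary.2
  have hconj := det_one_add_X_smul_map_C_conj U (diagonal hM.eigenvalues) (star U) hUU
  rw [← hspec] at hconj
  rw [hconj, det_one_add_X_smul_map_C_diagonal, degree_prod_one_add_C_mul_X,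
    hM.rank_eq_card_non_zero_eigs]

theorem stmt1_general (n : ℕ) (A B : Matrix (Fin n) (Fin n) ℝ)
    (hA : IsUnit A.det) (hsymm : (A⁻¹ * B).IsSymm) :
    ((A.map C + (X : ℝ[X]) • B.map C).det).degree = (B.rank : ℕ) := by
  have hM : (A⁻¹ * B).IsHermitian := by
    rwa [IsHermitian, conjTranspose_eq_transpose_of_trivial]
  have hB : A * (A⁻¹ * B) = B := mul_nonsing_inv_cancel_left A B hA
  rw [← hB, det_map_C_add_X_smul_map_C_mul, degree_C_mul hA.ne_zero,
    hM.degree_det_one_add_X_smul_map_C, rank_mul_eq_right_of_isUnit_det A _ hA]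

/-- For `n ≥ 1` and real `n×n` matrices `A, B` with `A` invertible and
`A⁻¹B` symmetric, the univariate polynomial `p(t) = det(A + t B)` has degree exactly
`rank B`. -/
theorem stmt1 (n : ℕ) (hn : 1 ≤ n) (A B : Matrix (Fin n) (Fin n) ℝ)
    (hA : IsUnit A.det) (hsymm : (A⁻¹ * B).IsSymm) :
    ((A.map C + (X : ℝ[X]) • B.map C).det).degree = (B.rank : ℕ) :=
  stmt1_general n A B hA hsymm
end

section
/- Let n ≥ 1 and let A, B be arbitrary n×n real matrices (A not necessarily invertible). Then the univariate polynomial p(t) = det(A + t·B) has degree at most rank(B); that is, either p is the zero polynomial or deg(p) ≤ rank(B). -/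
open Polynomial

/-- If more rows are taken from `B` than its rank, the resulting piecewise matrix is singular. -/
lemma piecewise_det_eq_zero {n : ℕ} (A B : Matrix (Fin n) (Fin n) ℝ)
    (s : Finset (Fin n)) (hs : B.rank < s.card) :
    (Matrix.of (s.piecewise B A)).det = 0 := by
  classical
  -- the rows of `B` indexed by `s` are linearly dependent
  have hnli : ¬ LinearIndependent ℝ (fun i : s => B (i : Fin n)) := by
    intro hli
    have h1 : s.card = Module.finrank ℝ
        (Submodule.span ℝ (Set.range (fun i : s => B (i : Fin n)))) := by
      simpa [Fintype.card_coe, Set.finrank] using linearIndependent_iff_card_eq_finrank_span.mp hli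
    have h2 : Submodule.span ℝ (Set.range (fun i : s => B (i : Fin n)))
        ≤ Submodule.span ℝ (Set.range B) := by
      apply Submodule.span_mono
      rintro _ ⟨i, rfl⟩
      exact ⟨i, rfl⟩
    have h3 := Submodule.finrank_mono h2
    have h4 : B.rank = Module.finrank ℝ (Submodule.span ℝ (Set.range B)) :=
      Matrix.rank_eq_finrank_span_row B
    rw [← h1] at h3
    omega
  obtain ⟨g, hg, i₀, hi₀⟩ := Fintype.not_linearIndependent_iff.mp hnli
  -- build a nonzero vector in the left kernel
  set v : Fin n → ℝ := fun i => if h : i ∈ s then g ⟨i, h⟩ else 0 with hv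
  have hvne : v ≠ 0 := by
    intro h0
    apply hi₀
    have := congrFun h0 (i₀ : Fin n)
    simpa [hv, i₀.2] using this
  have hmul : Matrix.vecMul v (Matrix.of (s.piecewise B A)) = 0 := by
    funext j
    simp only [Pi.zero_apply]
    have heq : Matrix.vecMul v (Matrix.of (s.piecewise B A)) j
        = ∑ i : Fin n, v i * (s.piecewise B A) i j := by
      simp [Matrix.vecMul, dotProduct]
    rw [heq]
    have hsum : ∑ i : Fin n, v i * (s.piecewise B A) i j
        = ∑ i ∈ s, (fun i => v i * (s.piecewise B A) i j) i := by
      refine (Finset.sum_subset s.subset_univ ?_).symm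
      intro i _ hi
      simp [hv, hi]
    rw [hsum]
    have h5 : ∑ i ∈ s, v i * (s.piecewise B A) i j = ∑ i ∈ s, (fun i => v i * B i j) i := by
      refine Finset.sum_congr rfl fun i hi => ?_
      simp [Finset.piecewise, hi]
    rw [h5]
    have h6 := congrFun hg j
    simp only [Finset.sum_apply, Pi.smul_apply, smul_eq_mul, Pi.zero_apply] at h6
    rw [← h6, ← Finset.sum_attach s (fun i => v i * B i j)]
    refine Finset.sum_congr rfl fun i _ => ?_
    simp [hv, i.2]
  exact Matrix.exists_vecMul_eq_zero_iff.mp ⟨v, hvne, hmul⟩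

/-- For `n ≥ 1` and arbitrary real `n×n` matrices `A, B`, the univariate
polynomial `p(t) = det(A + t B)` has degree at most `rank B` (where the zero polynomial has
degree `⊥`, so this includes the case `p = 0`). -/
theorem stmt2 (n : ℕ) (hn : 1 ≤ n) (A B : Matrix (Fin n) (Fin n) ℝ) :
    ((A.map C + (X : ℝ[X]) • B.map C).det).degree ≤ (B.rank : ℕ) := by
  classical
  set A' : Matrix (Fin n) (Fin n) ℝ[X] := A.map C with hA'
  set B' : Matrix (Fin n) (Fin n) ℝ[X] := B.map C with hB'
  have hdet : (A' + (X : ℝ[X]) • B').det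
      = ∑ s : Finset (Fin n),
          (C ((Matrix.of (s.piecewise B A)).det)) * (X : ℝ[X]) ^ s.card := by
    have h0 : (A' + (X : ℝ[X]) • B').det
        = Matrix.detRowAlternating (((X : ℝ[X]) • B') + A') := by
      rw [add_comm]
      rfl
    rw [h0]
    rw [show (Matrix.detRowAlternating (((X : ℝ[X]) • B') + A') : ℝ[X])
        = ∑ s : Finset (Fin n), Matrix.detRowAlternating (s.piecewise ((X : ℝ[X]) • B') A')
        from (Matrix.detRowAlternating).toMultilinearMap.map_add_univ _ _]
    refine Finset.sum_congr rfl fun s _ => ?_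
    have hpw : s.piecewise ((X : ℝ[X]) • B') A'
        = s.piecewise (fun i => (X : ℝ[X]) • (s.piecewise B' A') i) (s.piecewise B' A') := by
      funext i
      by_cases h : i ∈ s <;> simp only [Finset.piecewise_eq_of_mem _ _ _, Finset.piecewise_eq_of_notMem _ _ _, Finset.piecewise, h, if_pos, if_neg, not_false_iff, ite_true, ite_false] <;> rfl
    rw [hpw]
    rw [show (Matrix.detRowAlternating
          (s.piecewise (fun i => (X : ℝ[X]) • (s.piecewise B' A') i) (s.piecewise B' A')) : ℝ[X])
        = (∏ _i ∈ s, (X : ℝ[X])) • Matrix.detRowAlternating (s.piecewise B' A')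
        from (Matrix.detRowAlternating).toMultilinearMap.map_piecewise_smul
          (fun _ => (X : ℝ[X])) (s.piecewise B' A') s]
    have hmap : s.piecewise B' A' = (Matrix.of (s.piecewise B A)).map C := by
      funext i j
      by_cases h : i ∈ s
      · simp [Finset.piecewise, h, hB']
      · simp [Finset.piecewise, h, hA']
    have hC : Matrix.detRowAlternating (s.piecewise B' A')
        = C ((Matrix.of (s.piecewise B A)).det) := by
      rw [hmap]
      exact (RingHom.map_det C _).symm
    rw [hC]
    rw [Finset.prod_const, smul_eq_mul, mul_comm]
  rw [hdet]
  refine (Polynomial.degree_sum_le _ _).trans ?_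
  refine Finset.sup_le fun s _ => ?_
  by_cases h : (Matrix.of (s.piecewise B A)).det = 0
  · simp [h]
  · have hcard : s.card ≤ B.rank := by
      by_contra hc
      exact h (piecewise_det_eq_zero A B s (by omega))
    exact (Polynomial.degree_C_mul_X_pow_le s.card _).trans (by exact_mod_cast hcard)
end

section
/- Let A₀, A₁, …, A_m be n×n real matrices and let p be the multivariate polynomial in m variables x₁,…,x_m given by p(x) = det(A₀ + x₁A₁ + ⋯ + x_mA_m) (the determinant of the matrix with affine-linear polynomial entries). If r ∈ ℕ is such that rank(x₁A₁ + ⋯ + x_mA_m) ≤ r for every x ∈ ℝ^m, then the total degree of p is at most r. -/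
open Polynomial in
lemma aux_sum_dite {M : Type*} [AddCommMonoid M] {d r : ℕ} (hdr : d ≤ r) (f : Fin d → M) :
    ∑ k : Fin r, (if h : (k : ℕ) < d then f ⟨k, h⟩ else 0) = ∑ k : Fin d, f k := by
  rw [Fin.sum_univ_eq_sum_range (fun k => if h : k < d then f ⟨k, h⟩ else 0) r]
  rw [show (∑ k : Fin d, f k) = ∑ k ∈ Finset.range d, (if h : k < d then f ⟨k, h⟩ else 0) by
    rw [← Fin.sum_univ_eq_sum_range (fun k => if h : k < d then f ⟨k, h⟩ else 0) d]
    exact Finset.sum_congr rfl fun k _ => by simp [k.isLt]]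
  exact (Finset.sum_subset (Finset.range_subset_range.2 hdr)
    (fun x _ hx => dif_neg (by simpa using hx))).symm

lemma aux_rank_factor {n r : ℕ} (B : Matrix (Fin n) (Fin n) ℝ) (h : B.rank ≤ r) :
    ∃ (C : Matrix (Fin n) (Fin r) ℝ) (D : Matrix (Fin r) (Fin n) ℝ), B = C * D := by
  set V := LinearMap.range B.mulVecLin with hV
  have hfr : Module.finrank ℝ V = B.rank := rfl
  let b : Module.Basis (Fin B.rank) ℝ V := Module.finBasisOfFinrankEq ℝ V hfr
  have hcolmem : ∀ j, B.mulVec (Pi.single j 1) ∈ V := fun j => ⟨Pi.single j 1, rfl⟩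
  let col : Fin n → V := fun j => ⟨B.mulVec (Pi.single j 1), hcolmem j⟩
  refine ⟨fun i k => if hk : (k : ℕ) < B.rank then ((b ⟨k, hk⟩ : Fin n → ℝ) i) else 0,
    fun k j => if hk : (k : ℕ) < B.rank then b.repr (col j) ⟨k, hk⟩ else 0, ?_⟩
  ext i j
  have hrepr : ((col j : V) : Fin n → ℝ) = ∑ k : Fin B.rank,
      b.repr (col j) k • ((b k : V) : Fin n → ℝ) := by
    conv_lhs => rw [← b.sum_repr (col j)]
    push_cast [Submodule.coe_sum]
    rfl
  have hBij : B i j = ((col j : V) : Fin n → ℝ) i := by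
    simp [col, Matrix.mulVec_single]
  change B i j = ∑ k : Fin r, (if hk : (k : ℕ) < B.rank then ((b ⟨k, hk⟩ : Fin n → ℝ) i) else 0) *
    (if hk : (k : ℕ) < B.rank then b.repr (col j) ⟨k, hk⟩ else 0)
  rw [hBij, hrepr]
  rw [show (∑ k : Fin r, (if hk : (k : ℕ) < B.rank then ((b ⟨k, hk⟩ : Fin n → ℝ) i) else 0) *
      (if hk : (k : ℕ) < B.rank then b.repr (col j) ⟨k, hk⟩ else 0)) =
      ∑ k : Fin r, (if hk : (k : ℕ) < B.rank then
        ((b ⟨k, hk⟩ : Fin n → ℝ) i) * b.repr (col j) ⟨k, hk⟩ else 0) from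
    Finset.sum_congr rfl (fun k _ => by split <;> simp)]
  rw [aux_sum_dite h (fun k => ((b k : Fin n → ℝ) i) * b.repr (col j) k)]
  simp [Finset.sum_apply, mul_comm]

open Polynomial in
lemma aux_natDegree_det_le {ι : Type*} [Fintype ι] [DecidableEq ι]
    (M : Matrix ι ι ℝ[X]) (bnd : ι → ℕ) (h : ∀ i j, (M i j).natDegree ≤ bnd j) :
    M.det.natDegree ≤ ∑ j, bnd j := by
  rw [Matrix.det_apply]
  refine Polynomial.natDegree_sum_le_of_forall_le _ _ fun σ _ => ?_
  rw [Units.smul_def]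
  rw [← Int.cast_smul_eq_zsmul ℝ]
  refine (Polynomial.natDegree_smul_le _ _).trans ?_
  refine (Polynomial.natDegree_prod_le _ _).trans ?_
  exact Finset.sum_le_sum fun j _ => h (σ j) j

open Polynomial in
lemma aux_lemmaA {n r : ℕ} (A₀ B : Matrix (Fin n) (Fin n) ℝ) (h : B.rank ≤ r) :
    (Matrix.det (A₀.map (Polynomial.C : ℝ → ℝ[X]) +
      (Polynomial.X : ℝ[X]) • B.map (Polynomial.C : ℝ → ℝ[X]))).natDegree ≤ r := by
  obtain ⟨Cm, D, rfl⟩ := aux_rank_factor B h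
  have key : A₀.map (Polynomial.C : ℝ → ℝ[X]) + (X : ℝ[X]) • (Cm * D).map Polynomial.C
      = A₀.map Polynomial.C - (-((X : ℝ[X]) • Cm.map Polynomial.C)) * D.map Polynomial.C := by
    rw [Matrix.neg_mul, sub_neg_eq_add, Matrix.smul_mul, Matrix.map_mul]
  rw [key, ← Matrix.det_fromBlocks_one₂₂]
  refine (aux_natDegree_det_le _ (Sum.elim (fun _ => 0) (fun _ => 1)) ?_).trans ?_
  · rintro (i | i) (j | j)
    · simp [Matrix.fromBlocks_apply₁₁]
    · simp only [Matrix.fromBlocks_apply₁₂, Sum.elim_inr, Matrix.neg_apply, Matrix.smul_apply,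
        Matrix.map_apply, smul_eq_mul, Polynomial.natDegree_neg]
      exact Polynomial.natDegree_mul_le.trans (by simp)
    · simp [Matrix.fromBlocks_apply₂₁]
    · simp only [Matrix.fromBlocks_apply₂₂, Sum.elim_inr, Matrix.one_apply]
      split <;> simp
  · simp [Fintype.sum_sum_type]

lemma aux_degree_eq_sum {m : ℕ} (s : Fin m →₀ ℕ) : s.degree = ∑ i, s i :=
  Finset.sum_subset (Finset.subset_univ _)
    (fun i _ hi => Finsupp.notMem_support_iff.mp hi)

open Polynomial in
lemma aux_coeff_eval {m : ℕ} (x : Fin m → ℝ) (p : MvPolynomial (Fin m) ℝ) (d : ℕ) :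
    (MvPolynomial.eval₂ (Polynomial.C : ℝ →+* ℝ[X])
        (fun i => Polynomial.C (x i) * Polynomial.X) p).coeff d
      = MvPolynomial.eval x (MvPolynomial.homogeneousComponent d p) := by
  rw [MvPolynomial.eval₂_eq', Polynomial.finset_sum_coeff,
    MvPolynomial.homogeneousComponent_apply, map_sum]
  rw [Finset.sum_filter]
  refine Finset.sum_congr rfl fun s _ => ?_
  have hprod : ∏ i, (Polynomial.C (x i) * Polynomial.X) ^ s i
      = Polynomial.C (∏ i, x i ^ s i) * Polynomial.X ^ (∑ i, s i) := by
    simp_rw [mul_pow, ← Polynomial.C_pow]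
    rw [Finset.prod_mul_distrib, ← map_prod, Finset.prod_pow_eq_pow_sum]
  rw [hprod, ← mul_assoc, ← Polynomial.C_mul, Polynomial.coeff_C_mul,
    Polynomial.coeff_X_pow, aux_degree_eq_sum s, MvPolynomial.eval_monomial]
  rw [Finsupp.prod_pow]
  by_cases hds : (∑ i, s i) = d
  · rw [if_pos hds, if_pos hds.symm, mul_one]
  · rw [if_neg hds, if_neg (fun hh => hds hh.symm), mul_zero]

/-- Let `A₀, A₁, …, A_m` be real `n×n` matrices and let
`p(x) = det(A₀ + x₁ A₁ + ⋯ + x_m A_m)` be the associated determinantal polynomial in the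
variables `x₁, …, x_m`. If `rank (x₁ A₁ + ⋯ + x_m A_m) ≤ r` for every `x ∈ ℝ^m`, then the
total degree of `p` is at most `r`. -/
theorem stmt3 (n m : ℕ) (A₀ : Matrix (Fin n) (Fin n) ℝ)
    (A : Fin m → Matrix (Fin n) (Fin n) ℝ) (r : ℕ)
    (hr : ∀ x : Fin m → ℝ, (∑ i, x i • A i).rank ≤ r) :
    ((A₀.map (MvPolynomial.C : ℝ → MvPolynomial (Fin m) ℝ) +
        ∑ i, (MvPolynomial.X i : MvPolynomial (Fin m) ℝ) •
          (A i).map (MvPolynomial.C : ℝ → MvPolynomial (Fin m) ℝ)).det).totalDegree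
      ≤ r := by
  classical
  set M : Matrix (Fin n) (Fin n) (MvPolynomial (Fin m) ℝ) :=
    A₀.map (MvPolynomial.C : ℝ → MvPolynomial (Fin m) ℝ) +
      ∑ i, (MvPolynomial.X i : MvPolynomial (Fin m) ℝ) •
        (A i).map (MvPolynomial.C : ℝ → MvPolynomial (Fin m) ℝ) with hM
  set p : MvPolynomial (Fin m) ℝ := M.det with hp
  -- the homogeneous components of degree > r vanish
  have hcomp : ∀ d, r < d → MvPolynomial.homogeneousComponent d p = 0 := by
    intro d hd
    apply MvPolynomial.funext
    intro x
    rw [map_zero, ← aux_coeff_eval x p d]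
    set φ : MvPolynomial (Fin m) ℝ →+* Polynomial ℝ :=
      MvPolynomial.eval₂Hom Polynomial.C (fun i => Polynomial.C (x i) * Polynomial.X) with hφ
    have hφp : MvPolynomial.eval₂ (Polynomial.C : ℝ →+* Polynomial ℝ)
        (fun i => Polynomial.C (x i) * Polynomial.X) p = φ p := rfl
    rw [hφp, hp, RingHom.map_det]
    have hmap : M.map φ = A₀.map (Polynomial.C : ℝ → Polynomial ℝ) +
        (Polynomial.X : Polynomial ℝ) •
          (∑ i, x i • A i).map (Polynomial.C : ℝ → Polynomial ℝ) := by
      ext i j : 2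
      simp only [hM, Matrix.map_apply, Matrix.add_apply, Matrix.sum_apply, Matrix.smul_apply,
        Matrix.map_apply, smul_eq_mul, map_add, map_sum, map_mul, hφ,
        MvPolynomial.eval₂Hom_X', MvPolynomial.eval₂Hom_C, map_sum, Polynomial.C_mul]
      rw [Finset.mul_sum]
      have hterm : ∀ k : Fin m, Polynomial.C (x k) * Polynomial.X * Polynomial.C (A k i j)
          = Polynomial.X * (Polynomial.C (x k) * Polynomial.C (A k i j)) := fun k => by ring
      simp_rw [hterm]
    rw [RingHom.mapMatrix_apply, hmap]
    exact Polynomial.coeff_eq_zero_of_natDegree_lt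
      (lt_of_le_of_lt (aux_lemmaA A₀ _ (hr x)) hd)
  -- conclude the total degree bound
  refine Finset.sup_le fun s hs => ?_
  by_contra hlt
  push_neg at hlt
  have hdeg : s.degree = s.sum fun _ e => e := rfl
  have h0 : MvPolynomial.coeff s p = 0 := by
    have hc := hcomp s.degree (by rw [hdeg]; omega)
    have h2 := MvPolynomial.coeff_homogeneousComponent (n := s.degree) (φ := p) s
    rw [hc, if_pos rfl] at h2
    simpa using h2.symm
  exact (MvPolynomial.mem_support_iff.mp hs) h0
end

section
/- Let p be a polynomial in n variables over ℝ. (a) For every x ∈ ℝⁿ, the univariate polynomial t ↦ p(t·x) (obtained by substituting t·xᵢ for the i-th variable) has degree at most the total degree of p. (b) If p is not the zero polynomial, then there exists a direction x ∈ ℝⁿ such that the univariate polynomial t ↦ p(t·x) has degree equal to the total degree of p. -/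
open MvPolynomial Polynomial

/-- Key coefficient identity: the `k`-th coefficient of `p(t·x)` is the evaluation at `x`
of the degree-`k` homogeneous component of `p`. -/
lemma coeff_aeval_line (n : ℕ) (p : MvPolynomial (Fin n) ℝ) (x : Fin n → ℝ) (k : ℕ) :
    (MvPolynomial.aeval (fun i => Polynomial.C (x i) * Polynomial.X) p :
        Polynomial ℝ).coeff k
      = MvPolynomial.eval x (MvPolynomial.homogeneousComponent k p) := by
  induction p using MvPolynomial.induction_on' with
  | monomial d c =>
      rw [MvPolynomial.aeval_monomial]
      have hprod : (d.prod fun i e => (Polynomial.C (x i) * Polynomial.X) ^ e)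
          = Polynomial.C (d.prod fun i e => (x i) ^ e) * Polynomial.X ^ d.degree := by
        rw [Finsupp.degree_apply]
        classical
        rw [Finsupp.prod, Finsupp.prod]
        induction d.support using Finset.induction_on with
        | empty => simp
        | insert _ _ h ih =>
            rw [Finset.prod_insert h, Finset.prod_insert h, Finset.sum_insert h, ih,
              mul_pow, Polynomial.C_mul, Polynomial.C_pow, pow_add]
            ring
      rw [hprod]
      have hhc : MvPolynomial.homogeneousComponent k (MvPolynomial.monomial d c)
          = if k = d.degree then MvPolynomial.monomial d c else 0 := by
        apply MvPolynomial.homogeneousComponent_of_mem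
        rw [MvPolynomial.mem_homogeneousSubmodule]
        exact MvPolynomial.isHomogeneous_monomial _ rfl
      rw [hhc]
      rw [Polynomial.algebraMap_eq, ← mul_assoc, ← Polynomial.C_mul, Polynomial.coeff_C_mul,
        Polynomial.coeff_X_pow]
      by_cases hk : k = d.degree
      · simp [hk, MvPolynomial.eval_monomial]
      · simp [hk]
  | add q r hq hr =>
      simp [map_add, hq, hr]

lemma homogeneousComponent_totalDegree_ne_zero (n : ℕ) (p : MvPolynomial (Fin n) ℝ)
    (hp : p ≠ 0) : MvPolynomial.homogeneousComponent p.totalDegree p ≠ 0 := by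
  obtain ⟨d, hd, hdeg⟩ := Finset.exists_mem_eq_sup p.support
    (MvPolynomial.support_nonempty.2 hp) (fun d => d.sum fun _ e => e)
  have hdd : d.degree = p.totalDegree := by
    rw [MvPolynomial.totalDegree, hdeg]; rfl
  intro h
  have := MvPolynomial.coeff_homogeneousComponent p.totalDegree p d
  rw [h, if_pos hdd, MvPolynomial.coeff_zero] at this
  exact (MvPolynomial.mem_support_iff.1 hd) this.symm

/-- Let `p` be a polynomial in `n` variables over `ℝ`.
(a) For every `x ∈ ℝⁿ`, the univariate polynomial `t ↦ p(t·x)` (substituting `t·xᵢ` for the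
`i`-th variable) has degree at most the total degree of `p`.
(b) If `p ≠ 0`, there is a direction `x ∈ ℝⁿ` so that `t ↦ p(t·x)` has degree equal to the
total degree of `p`. -/
theorem stmt4 (n : ℕ) (p : MvPolynomial (Fin n) ℝ) :
    (∀ x : Fin n → ℝ,
      (MvPolynomial.aeval (fun i => Polynomial.C (x i) * Polynomial.X) p :
          Polynomial ℝ).natDegree ≤ p.totalDegree) ∧
    (p ≠ 0 → ∃ x : Fin n → ℝ,
      (MvPolynomial.aeval (fun i => Polynomial.C (x i) * Polynomial.X) p :
          Polynomial ℝ).natDegree = p.totalDegree) := by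
  have key : ∀ x : Fin n → ℝ,
      (MvPolynomial.aeval (fun i => Polynomial.C (x i) * Polynomial.X) p :
          Polynomial ℝ).natDegree ≤ p.totalDegree := by
    intro x
    apply Polynomial.natDegree_le_iff_coeff_eq_zero.2
    intro k hk
    rw [coeff_aeval_line, MvPolynomial.homogeneousComponent_eq_zero _ _ hk, map_zero]
  refine ⟨key, fun hp => ?_⟩
  have hne := homogeneousComponent_totalDegree_ne_zero n p hp
  have : ∃ x : Fin n → ℝ,
      MvPolynomial.eval x (MvPolynomial.homogeneousComponent p.totalDegree p) ≠ 0 := by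
    by_contra h
    push_neg at h
    exact hne (MvPolynomial.funext (fun x => by simpa using h x))
  obtain ⟨x, hx⟩ := this
  refine ⟨x, le_antisymm (key x) ?_⟩
  apply Polynomial.le_natDegree_of_ne_zero
  rw [coeff_aeval_line]
  exact hx
end

section
/- Consider a POMDP with nonempty finite state, observation and action sets S, O, A, transition kernel α, observation kernel β, discount factor γ ∈ (0,1) and initial distribution μ ∈ Δ_S. Fix a policy π₀ ∈ Δ_A^O and a subset O' ⊆ O, let Π = {π ∈ Δ_A^O : π(·|o) = π₀(·|o) for all o ∉ O'} and let S_{O'} = {s ∈ S : β(o|s) > 0 for some o ∈ O'}. Then there exist multivariate polynomials q and (q_s)_{s∈S} in the variables {π(a|o) : o ∈ O', a ∈ A}, each of total degree at most |S_{O'}|, such that for every π ∈ Π: q(π) = det(I − γ·p_πᵀ), q_s(π) = det of the matrix obtained from I − γ·p_πᵀ by replacing its s-th column by μ, and the discounted state distribution satisfies ρ_γ^{π,μ}(s)·q(π) = (1−γ)·q_s(π) for every s ∈ S. In particular, restricted to Π, each ρ_γ^{π,μ}(s) is a rational function of the entries of π of degree at most |S_{O'}|. -/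
open Matrix MvPolynomial

/-! The entries of `p_π` are affine in the variables `π(a|o)`, `o ∈ O'`, and row `s` of `p_π`
involves them only when `s ∈ S_{O'}`. Hence column `s` of `I - γ p_πᵀ` has degree at most
`[s ∈ S_{O'}]`, and since every term of the Leibniz expansion takes one entry from each column,
both determinants have degree at most `|S_{O'}|`. As `p_π` is stochastic and `γ < 1`, the matrix
`I - γ p_π` is strictly diagonally dominant, hence invertible, and Cramer's rule gives `ρ`. -/

section Determinant

variable {n σ R : Type*} [DecidableEq n] [CommRing R]

theorem totalDegree_det_le_of_col [Fintype n] {M : Matrix n n (MvPolynomial σ R)} {d : n → ℕ}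
    (h : ∀ i j, (M i j).totalDegree ≤ d j) : M.det.totalDegree ≤ ∑ j, d j := by
  rw [det_apply]
  refine (totalDegree_finsetSum _ _).trans (Finset.sup_le fun τ _ => ?_)
  refine (totalDegree_smul_le _ _).trans ?_
  exact (totalDegree_finsetProd _ _).trans (Finset.sum_le_sum fun j _ => h (τ j) j)

theorem totalDegree_updateCol_C_le {M : Matrix n n (MvPolynomial σ R)} {d : n → ℕ}
    (h : ∀ i j, (M i j).totalDegree ≤ d j) (s : n) (b : n → R) (i j : n) :
    ((M.updateCol s fun k => C (b k)) i j).totalDegree ≤ d j := by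
  rw [updateCol_apply]
  split_ifs
  · simp [totalDegree_C]
  · exact h i j

theorem totalDegree_one_sub_smul_transpose_le {P : Matrix n n (MvPolynomial σ R)} {d : n → ℕ}
    (h : ∀ i j, (P i j).totalDegree ≤ d i) (γ : R) (i j : n) :
    ((1 - γ • Pᵀ) i j).totalDegree ≤ d j := by
  rw [Matrix.sub_apply]
  refine (totalDegree_sub _ _).trans (max_le ?_ ?_)
  · rw [one_apply]
    split_ifs <;> simp
  · exact (totalDegree_smul_le _ _).trans (h j i)

end Determinant

theorem Matrix.inv_mulVec_apply_mul_det {n K : Type*} [Fintype n] [DecidableEq n] [CommRing K]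
    (A : Matrix n n K) (b : n → K) (hA : IsUnit A.det) (i : n) :
    (A⁻¹ *ᵥ b) i * A.det = (A.updateCol i b).det := by
  rw [mul_comm, ← smul_eq_mul, ← Pi.smul_apply, det_smul_inv_mulVec_eq_cramer A b hA, cramer_apply]

theorem Matrix.det_one_sub_smul_transpose_ne_zero {n : Type*} [Fintype n] [DecidableEq n]
    {P : Matrix n n ℝ} (hP : P ∈ rowStochastic ℝ n) {γ : ℝ} (hγ : |γ| < 1) :
    (1 - γ • Pᵀ).det ≠ 0 := by
  rw [← det_transpose, transpose_sub, transpose_one, transpose_smul, transpose_transpose]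
  refine det_ne_zero_of_sum_row_lt_diag fun k => ?_
  have hoff : ∑ j ∈ Finset.univ.erase k, ‖(1 - γ • P) k j‖ = |γ| * (1 - P k k) := by
    rw [← sum_row_of_mem_rowStochastic hP k, ← Finset.sum_erase_add _ _ (Finset.mem_univ k),
      add_sub_cancel_right, Finset.mul_sum]
    refine Finset.sum_congr rfl fun j hj => ?_
    rw [Matrix.sub_apply, one_apply_ne (Finset.ne_of_mem_erase hj).symm, Matrix.smul_apply,
      smul_eq_mul, zero_sub, norm_neg, Real.norm_eq_abs, abs_mul,
      abs_of_nonneg (nonneg_of_mem_rowStochastic hP)]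
  have hdiag : 1 - |γ| * P k k ≤ ‖(1 - γ • P) k k‖ := by
    rw [Matrix.sub_apply, one_apply_eq, Matrix.smul_apply, smul_eq_mul, Real.norm_eq_abs]
    calc 1 - |γ| * P k k ≤ 1 - γ * P k k := by
          gcongr
          · exact nonneg_of_mem_rowStochastic hP
          · exact le_abs_self γ
      _ ≤ |1 - γ * P k k| := le_abs_self _
  rw [hoff]
  linarith

section POMDP

variable {S O A R : Type*} [Fintype O] [Fintype A]

/-- The matrix `p_π`, over an arbitrary semiring so that it can be evaluated at polynomial
policies. -/
def effectiveTransition [CommSemiring R] (α : S → A → S → R) (β : S → O → R) (π : O → A → R) :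
    Matrix S S R :=
  of fun s s' => ∑ a, (∑ o, β s o * π o a) * α s a s'

theorem effectiveTransition_mem_rowStochastic [Fintype S] [DecidableEq S] [CommSemiring R]
    [PartialOrder R] [IsOrderedRing R] {α : S → A → S → R} {β : S → O → R} {π : O → A → R}
    (hα : ∀ s a, (∀ s', 0 ≤ α s a s') ∧ ∑ s', α s a s' = 1)
    (hβ : ∀ s, (∀ o, 0 ≤ β s o) ∧ ∑ o, β s o = 1)
    (hπ : ∀ o, (∀ a, 0 ≤ π o a) ∧ ∑ a, π o a = 1) :
    effectiveTransition α β π ∈ rowStochastic R S := by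
  refine mem_rowStochastic_iff_sum.2 ⟨fun s s' => ?_, fun s => ?_⟩
  · exact Finset.sum_nonneg fun a _ => mul_nonneg
      (Finset.sum_nonneg fun o _ => mul_nonneg ((hβ s).1 o) ((hπ o).1 a)) ((hα s a).1 s')
  · calc ∑ s', effectiveTransition α β π s s'
        = ∑ a, (∑ o, β s o * π o a) * ∑ s', α s a s' := by
          simp only [effectiveTransition, of_apply, Finset.mul_sum]
          exact Finset.sum_comm
      _ = ∑ o, β s o * ∑ a, π o a := by
          simp only [(hα _ _).2, mul_one, Finset.mul_sum]
          exact Finset.sum_comm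
      _ = 1 := by simp only [(hπ _).2, mul_one, (hβ s).2]

theorem totalDegree_effectiveTransition_C_le [CommSemiring R] {σ : Type*}
    (α : S → A → S → R) (β : S → O → R) {π : O → A → MvPolynomial σ R} {s : S} {d : ℕ}
    (h : ∀ o a, β s o ≠ 0 → (π o a).totalDegree ≤ d) (s' : S) :
    (effectiveTransition (fun s a s' => C (α s a s')) (fun s o => C (β s o)) π s s').totalDegree
      ≤ d := by
  refine (totalDegree_finsetSum _ _).trans (Finset.sup_le fun a _ => ?_)
  refine (totalDegree_mul _ _).trans ?_
  rw [totalDegree_C, add_zero]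
  refine (totalDegree_finsetSum _ _).trans (Finset.sup_le fun o _ => ?_)
  by_cases hβo : β s o = 0
  · simp [hβo]
  · exact (totalDegree_mul _ _).trans (by rw [totalDegree_C, zero_add]; exact h o a hβo)

end POMDP

section PolicyPolynomial

variable {O A R : Type*} [CommSemiring R]

open scoped Classical in
noncomputable def policyPolynomial (O' : Set O) (π₀ : O → A → R) (o : O) (a : A) :
    MvPolynomial (O' × A) R :=
  if h : o ∈ O' then X (⟨o, h⟩, a) else C (π₀ o a)

theorem eval_policyPolynomial {O' : Set O} {π₀ π : O → A → R}
    (hπ : ∀ o ∉ O', π o = π₀ o) (o : O) (a : A) :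
    eval (fun v => π v.1.1 v.2) (policyPolynomial O' π₀ o a) = π o a := by
  unfold policyPolynomial
  split_ifs with ho
  · rw [eval_X]
  · rw [eval_C, hπ o ho]

theorem totalDegree_policyPolynomial_le_one (O' : Set O) (π₀ : O → A → R) (o : O) (a : A) :
    (policyPolynomial O' π₀ o a).totalDegree ≤ 1 := by
  unfold policyPolynomial
  split_ifs
  · exact (totalDegree_monomial_le _ _).trans (by simp)
  · simp [totalDegree_C]

theorem totalDegree_policyPolynomial_of_notMem {O' : Set O} (π₀ : O → A → R) {o : O}
    (ho : o ∉ O') (a : A) : (policyPolynomial O' π₀ o a).totalDegree = 0 := by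
  rw [policyPolynomial, dif_neg ho, totalDegree_C]

end PolicyPolynomial

theorem stmt5_general {S O A : Type*} [Fintype S] [Fintype O] [Fintype A]
    [DecidableEq S]
    (α : S → A → S → ℝ) (hα : ∀ s a, (∀ s', 0 ≤ α s a s') ∧ ∑ s', α s a s' = 1)
    (β : S → O → ℝ) (hβ : ∀ s, (∀ o, 0 ≤ β s o) ∧ ∑ o, β s o = 1)
    (γ : ℝ) (hγ : γ ∈ Set.Ioo (0 : ℝ) 1)
    (μ : S → ℝ)
    (π₀ : O → A → ℝ)
    (O' : Set O) :
    ∃ (q : MvPolynomial (O' × A) ℝ) (qs : S → MvPolynomial (O' × A) ℝ),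
      q.totalDegree ≤ Nat.card {s : S // ∃ o ∈ O', 0 < β s o} ∧
      (∀ s, (qs s).totalDegree ≤ Nat.card {s : S // ∃ o ∈ O', 0 < β s o}) ∧
      ∀ π : O → A → ℝ,
        (∀ o, (∀ a, 0 ≤ π o a) ∧ ∑ a, π o a = 1) →
        (∀ o ∉ O', π o = π₀ o) →
        let pπ : Matrix S S ℝ := Matrix.of fun s s' => ∑ a, (∑ o, β s o * π o a) * α s a s'
        let ρ : S → ℝ := (1 - γ) • ((1 - γ • pπᵀ)⁻¹).mulVec μ
        MvPolynomial.eval (fun v => π v.1.1 v.2) q = (1 - γ • pπᵀ).det ∧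
        (∀ s : S, MvPolynomial.eval (fun v => π v.1.1 v.2) (qs s)
            = ((1 - γ • pπᵀ).updateCol s μ).det) ∧
        (∀ s : S, ρ s * MvPolynomial.eval (fun v => π v.1.1 v.2) q
            = (1 - γ) * MvPolynomial.eval (fun v => π v.1.1 v.2) (qs s)) := by
  classical
  set P := effectiveTransition (fun s a s' => C (α s a s')) (fun s o => C (β s o))
    (policyPolynomial O' π₀)
  set M : Matrix S S (MvPolynomial (O' × A) ℝ) := 1 - γ • Pᵀ
  set d : S → ℕ := fun s => if ∃ o ∈ O', 0 < β s o then 1 else 0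
  have hPdeg : ∀ s s', (P s s').totalDegree ≤ d s := by
    refine fun s => totalDegree_effectiveTransition_C_le α β fun o a hβo => ?_
    by_cases hs : ∃ o ∈ O', 0 < β s o
    · simpa [d, hs] using totalDegree_policyPolynomial_le_one O' π₀ o a
    · have ho : o ∉ O' := fun ho => hs ⟨o, ho, ((hβ s).1 o).lt_of_ne' hβo⟩
      simp [totalDegree_policyPolynomial_of_notMem π₀ ho a]
  have hMdeg := totalDegree_one_sub_smul_transpose_le hPdeg γ
  have hcard : ∑ s, d s = Nat.card {s : S // ∃ o ∈ O', 0 < β s o} := by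
    simp [d, Finset.sum_boole, Nat.card_eq_fintype_card, Fintype.card_subtype]
  refine ⟨M.det, fun s => (M.updateCol s fun i => C (μ i)).det,
    hcard ▸ totalDegree_det_le_of_col hMdeg,
    fun s => hcard ▸ totalDegree_det_le_of_col (totalDegree_updateCol_C_le hMdeg s μ), ?_⟩
  intro π hπ hπO' pπ ρ
  have hM : M.map (eval fun v => π v.1.1 v.2) = 1 - γ • pπᵀ := by
    ext i j
    simp [M, P, Matrix.one_apply, apply_ite, smul_eq_C_mul, effectiveTransition, pπ,
      eval_policyPolynomial hπO']
  have hq : eval (fun v => π v.1.1 v.2) M.det = (1 - γ • pπᵀ).det := by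
    rw [RingHom.map_det, RingHom.mapMatrix_apply, hM]
  have hqs : ∀ s, eval (fun v => π v.1.1 v.2) (M.updateCol s fun i => C (μ i)).det
      = ((1 - γ • pπᵀ).updateCol s μ).det := by
    intro s
    rw [RingHom.map_det, RingHom.mapMatrix_apply, map_updateCol, hM]
    simp [Function.comp_def]
  have hdet : (1 - γ • pπᵀ).det ≠ 0 :=
    det_one_sub_smul_transpose_ne_zero (effectiveTransition_mem_rowStochastic hα hβ hπ)
      (abs_lt.2 ⟨by linarith [hγ.1], hγ.2⟩)
  refine ⟨hq, hqs, fun s => ?_⟩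
  rw [hq, hqs, ← inv_mulVec_apply_mul_det _ _ (isUnit_iff_ne_zero.2 hdet)]
  simp only [ρ, Pi.smul_apply, smul_eq_mul, mul_assoc]

/-- For a POMDP with finite nonempty state, observation and action spaces
`S, O, A`, transition kernel `α`, observation kernel `β`, discount `γ ∈ (0,1)` and initial
distribution `μ`, fix a policy `π₀` and a subset `O' ⊆ O`. There exist multivariate
polynomials `q` and `(qs s)_{s ∈ S}` in the variables `{π(a|o) : o ∈ O', a ∈ A}`, each of
total degree at most `|S_{O'}|` where `S_{O'} = {s : β(o|s) > 0 for some o ∈ O'}`, such that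
for every policy `π` agreeing with `π₀` outside `O'`: `q(π) = det(I - γ pπᵀ)`,
`qs s (π) = det` of `I - γ pπᵀ` with its `s`-th column replaced by `μ`, and the discounted
state distribution `ρ = (1-γ)(I - γ pπᵀ)⁻¹ μ` satisfies `ρ(s) · q(π) = (1-γ) · qs s (π)`. -/
theorem stmt5 {S O A : Type*} [Fintype S] [Fintype O] [Fintype A]
    [DecidableEq S] [Nonempty S] [Nonempty O] [Nonempty A]
    (α : S → A → S → ℝ) (hα : ∀ s a, (∀ s', 0 ≤ α s a s') ∧ ∑ s', α s a s' = 1)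
    (β : S → O → ℝ) (hβ : ∀ s, (∀ o, 0 ≤ β s o) ∧ ∑ o, β s o = 1)
    (γ : ℝ) (hγ : γ ∈ Set.Ioo (0 : ℝ) 1)
    (μ : S → ℝ) (hμ : (∀ s, 0 ≤ μ s) ∧ ∑ s, μ s = 1)
    (π₀ : O → A → ℝ) (hπ₀ : ∀ o, (∀ a, 0 ≤ π₀ o a) ∧ ∑ a, π₀ o a = 1)
    (O' : Set O) :
    ∃ (q : MvPolynomial (O' × A) ℝ) (qs : S → MvPolynomial (O' × A) ℝ),
      q.totalDegree ≤ Nat.card {s : S // ∃ o ∈ O', 0 < β s o} ∧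
      (∀ s, (qs s).totalDegree ≤ Nat.card {s : S // ∃ o ∈ O', 0 < β s o}) ∧
      ∀ π : O → A → ℝ,
        (∀ o, (∀ a, 0 ≤ π o a) ∧ ∑ a, π o a = 1) →
        (∀ o ∉ O', π o = π₀ o) →
        let pπ : Matrix S S ℝ := Matrix.of fun s s' => ∑ a, (∑ o, β s o * π o a) * α s a s'
        let ρ : S → ℝ := (1 - γ) • ((1 - γ • pπᵀ)⁻¹).mulVec μ
        MvPolynomial.eval (fun v => π v.1.1 v.2) q = (1 - γ • pπᵀ).det ∧
        (∀ s : S, MvPolynomial.eval (fun v => π v.1.1 v.2) (qs s)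
            = ((1 - γ • pπᵀ).updateCol s μ).det) ∧
        (∀ s : S, ρ s * MvPolynomial.eval (fun v => π v.1.1 v.2) q
            = (1 - γ) * MvPolynomial.eval (fun v => π v.1.1 v.2) (qs s)) :=
  stmt5_general α hα β hβ γ hγ μ π₀ O'
end

section
/- Let Ω ⊆ ℝ^d be compact and convex and let f : Ω → ℝ^m be a degree-one rational map with common denominator. Then the image f(Ω) is convex, and every extreme point of f(Ω) lies in the image of the set of extreme points of Ω; that is, extremePoints(f(Ω)) ⊆ f(extremePoints(Ω)). -/
open Set

private lemma stmt8_key {d m : ℕ} (p : (Fin d → ℝ) →ᵃ[ℝ] (Fin m → ℝ))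
    (q : (Fin d → ℝ) →ᵃ[ℝ] ℝ) (x y : Fin d → ℝ) (a b : ℝ) (hab : a + b = 1)
    (hx : q x ≠ 0) (hy : q y ≠ 0) (hz : a * q x + b * q y ≠ 0) :
    (q (a • x + b • y))⁻¹ • p (a • x + b • y)
      = (a * q x / (a * q x + b * q y)) • ((q x)⁻¹ • p x)
        + (b * q y / (a * q x + b * q y)) • ((q y)⁻¹ • p y) := by
  rw [Convex.combo_affine_apply hab, Convex.combo_affine_apply hab]
  funext i
  simp only [Pi.add_apply, Pi.smul_apply, smul_eq_mul]
  field_simp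

private lemma stmt8_aux {d m : ℕ} (Ω : Set (Fin d → ℝ)) (hcomp : IsCompact Ω)
    (hconv : Convex ℝ Ω)
    (p : (Fin d → ℝ) →ᵃ[ℝ] (Fin m → ℝ)) (q : (Fin d → ℝ) →ᵃ[ℝ] ℝ)
    (hq : ∀ x ∈ Ω, 0 < q x)
    (f : (Fin d → ℝ) → (Fin m → ℝ)) (hf : ∀ x ∈ Ω, f x = (q x)⁻¹ • p x) :
    Convex ℝ (f '' Ω) ∧
    Set.extremePoints ℝ (f '' Ω) ⊆ f '' (Set.extremePoints ℝ Ω) := by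
  have hD : ∀ x ∈ Ω, ∀ y ∈ Ω, ∀ a b : ℝ, 0 ≤ a → 0 ≤ b → a + b = 1 →
      0 < a * q x + b * q y := by
    intro x hx y hy a b ha hb hab
    rcases ha.eq_or_lt.imp Eq.symm id with h | h
    · have hb1 : b = 1 := by linarith
      rw [h, hb1, zero_mul, one_mul, zero_add]
      exact hq y hy
    · nlinarith [mul_pos h (hq x hx), mul_nonneg hb (hq y hy).le]
  have hconv' : Convex ℝ (f '' Ω) := by
    rintro _ ⟨x, hx, rfl⟩ _ ⟨y, hy, rfl⟩ a b ha hb hab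
    have hqx := (hq x hx).ne'
    have hqy := (hq y hy).ne'
    have hDpos : 0 < a * q y + b * q x := hD y hy x hx a b ha hb hab
    have hD0 : a * q y + b * q x ≠ 0 := hDpos.ne'
    have hc : 0 ≤ a * q y / (a * q y + b * q x) :=
      div_nonneg (mul_nonneg ha (hq y hy).le) hDpos.le
    have hc' : 0 ≤ b * q x / (a * q y + b * q x) :=
      div_nonneg (mul_nonneg hb (hq x hx).le) hDpos.le
    have hcc : a * q y / (a * q y + b * q x) + b * q x / (a * q y + b * q x) = 1 := by
      rw [← add_div]
      exact div_self hD0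
    have hz : (a * q y / (a * q y + b * q x)) • x + (b * q x / (a * q y + b * q x)) • y ∈ Ω :=
      hconv hx hy hc hc' hcc
    refine ⟨_, hz, ?_⟩
    have hE : (a * q y / (a * q y + b * q x)) * q x + (b * q x / (a * q y + b * q x)) * q y
        = q x * q y / (a * q y + b * q x) := by
      field_simp
      linear_combination hab
    have hne : (a * q y / (a * q y + b * q x)) * q x + (b * q x / (a * q y + b * q x)) * q y
        ≠ 0 := by
      rw [hE]
      positivity
    have h1 : (a * q y / (a * q y + b * q x)) * q x
        / ((a * q y / (a * q y + b * q x)) * q x + (b * q x / (a * q y + b * q x)) * q y)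
        = a := by
      rw [hE]
      field_simp
    have h2 : (b * q x / (a * q y + b * q x)) * q y
        / ((a * q y / (a * q y + b * q x)) * q x + (b * q x / (a * q y + b * q x)) * q y)
        = b := by
      rw [hE]
      field_simp
    rw [hf _ hz, stmt8_key p q x y _ _ hcc hqx hqy hne, h1, h2, hf x hx, hf y hy]
  refine ⟨hconv', ?_⟩
  rintro v hv
  obtain ⟨⟨x₀, hx₀, hfx₀⟩, hvext⟩ := hv
  have hmemF : ∀ x ∈ Ω, (f x = v ↔ p x = q x • v) := by
    intro x hx
    rw [hf x hx]
    constructor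
    · intro h
      rw [← h, smul_smul, mul_inv_cancel₀ (hq x hx).ne', one_smul]
    · intro h
      rw [h, smul_smul, inv_mul_cancel₀ (hq x hx).ne', one_smul]
  set F : Set (Fin d → ℝ) := {x ∈ Ω | p x = q x • v} with hFdef
  have hFconv : Convex ℝ F := by
    rintro x ⟨hx, hpx⟩ y ⟨hy, hpy⟩ a b ha hb hab
    refine ⟨hconv hx hy ha hb hab, ?_⟩
    rw [Convex.combo_affine_apply hab, Convex.combo_affine_apply hab, hpx, hpy,
      smul_smul, smul_smul, smul_eq_mul, smul_eq_mul, add_smul]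
  have hFclosed : IsClosed F := by
    have hp : Continuous p := p.continuous_of_finiteDimensional
    have hqc : Continuous q := q.continuous_of_finiteDimensional
    exact hcomp.isClosed.inter (isClosed_eq hp (hqc.smul continuous_const))
  have hFcomp : IsCompact F := hcomp.of_isClosed_subset hFclosed (sep_subset _ _)
  have hFne : F.Nonempty := ⟨x₀, hx₀, (hmemF x₀ hx₀).mp hfx₀⟩
  obtain ⟨x₁, hx₁F, hx₁ext⟩ := hFcomp.extremePoints_nonempty hFne
  have hx₁Ω : x₁ ∈ Ω := hx₁F.1
  have hfx₁ : f x₁ = v := (hmemF x₁ hx₁Ω).mpr hx₁F.2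
  refine ⟨x₁, ⟨hx₁Ω, ?_⟩, hfx₁⟩
  intro a ha b hb hseg
  obtain ⟨α, β, hα, hβ, hαβ, hcombo⟩ := hseg
  have hDpos : 0 < α * q a + β * q b := hD a ha b hb α β hα.le hβ.le hαβ
  have hkey := stmt8_key p q a b α β hαβ (hq a ha).ne' (hq b hb).ne' hDpos.ne'
  have hseg' : v ∈ openSegment ℝ (f a) (f b) := by
    refine ⟨α * q a / (α * q a + β * q b), β * q b / (α * q a + β * q b),
      div_pos (mul_pos hα (hq a ha)) hDpos, div_pos (mul_pos hβ (hq b hb)) hDpos,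
      by rw [← add_div, div_self hDpos.ne'], ?_⟩
    rw [hf a ha, hf b hb, ← hkey, hcombo, ← hf x₁ hx₁Ω, hfx₁]
  have hfa := hvext ⟨a, ha, rfl⟩ ⟨b, hb, rfl⟩ hseg'
  have hfb := hvext ⟨b, hb, rfl⟩ ⟨a, ha, rfl⟩ (by rwa [openSegment_symm] at hseg')
  exact hx₁ext ⟨ha, (hmemF a ha).mp hfa⟩ ⟨hb, (hmemF b hb).mp hfb⟩ ⟨α, β, hα, hβ, hαβ, hcombo⟩

/-- Let `Ω ⊆ ℝ^d` be compact and convex and let `f = p/q` be a degree-one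
rational map with common denominator on `Ω` (with `p` affine into `ℝ^m`, `q` affine and
nonvanishing on `Ω`). Then `f(Ω)` is convex and every extreme point of `f(Ω)` lies in the
image of the extreme points of `Ω`. -/
theorem stmt8 {d m : ℕ} (Ω : Set (Fin d → ℝ)) (hcomp : IsCompact Ω) (hconv : Convex ℝ Ω)
    (p : (Fin d → ℝ) →ᵃ[ℝ] (Fin m → ℝ)) (q : (Fin d → ℝ) →ᵃ[ℝ] ℝ)
    (hq : ∀ x ∈ Ω, q x ≠ 0)
    (f : (Fin d → ℝ) → (Fin m → ℝ)) (hf : ∀ x ∈ Ω, f x = (q x)⁻¹ • p x) :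
    Convex ℝ (f '' Ω) ∧
    Set.extremePoints ℝ (f '' Ω) ⊆ f '' (Set.extremePoints ℝ Ω) := by
  rcases Set.eq_empty_or_nonempty Ω with rfl | ⟨w, hw⟩
  · rw [Set.image_empty]
    exact ⟨convex_empty, Set.Subset.trans extremePoints_subset (Set.empty_subset _)⟩
  have ivt : ∀ x ∈ Ω, ∀ y ∈ Ω, q x < 0 → 0 < q y → False := by
    intro x hx y hy hqx hqy
    have hcont : Continuous (fun t : ℝ => q ((1 - t) • x + t • y)) := by
      exact q.continuous_of_finiteDimensional.comp
        (((continuous_const.sub continuous_id).smul continuous_const).add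
          (continuous_id.smul continuous_const))
    have hmem : (0 : ℝ) ∈ Icc ((fun t : ℝ => q ((1 - t) • x + t • y)) 0)
        ((fun t : ℝ => q ((1 - t) • x + t • y)) 1) := by
      simp only [sub_zero, one_smul, zero_smul, add_zero, sub_self, zero_add]
      exact ⟨hqx.le, hqy.le⟩
    obtain ⟨t, htI, hqt⟩ :=
      intermediate_value_Icc (zero_le_one) hcont.continuousOn hmem
    have hzmem : (1 - t) • x + t • y ∈ Ω :=
      hconv hx hy (by linarith [htI.2]) htI.1 (by ring)
    exact hq _ hzmem hqt
  rcases lt_or_gt_of_ne (hq w hw) with hneg | hpos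
  · -- q is negative on Ω; apply the aux lemma to -p, -q
    have hq' : ∀ x ∈ Ω, 0 < (-q) x := by
      intro x hx
      rcases lt_or_gt_of_ne (hq x hx) with h | h
      · simpa using h
      · exact absurd (ivt w hw x hx hneg h) (fun hfalse => hfalse)
    have hf' : ∀ x ∈ Ω, f x = ((-q) x)⁻¹ • ((-p) x) := by
      intro x hx
      rw [hf x hx]
      simp [inv_neg]
    exact stmt8_aux Ω hcomp hconv (-p) (-q) hq' f hf'
  · have hq' : ∀ x ∈ Ω, 0 < q x := by
      intro x hx
      rcases lt_or_gt_of_ne (hq x hx) with h | h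
      · exact absurd (ivt x hx w hw h hpos) (fun hfalse => hfalse)
      · exact h
    exact stmt8_aux Ω hcomp hconv p q hq' f hf
end

section
/- Consider an MDP with nonempty finite state and action sets S, A, transition kernel α, discount factor γ ∈ (0,1) and initial distribution μ ∈ Δ_S. Then the set of discounted state-action frequencies equals an explicit polyhedron: {η_γ^{τ,μ} : τ ∈ Δ_A^S} = {η ∈ ℝ^{S×A} : η(s,a) ≥ 0 for all (s,a) ∈ S×A, and Σ_a η(s,a) − γ·Σ_{s',a'} α(s|s',a')·η(s',a') = (1−γ)·μ(s) for all s ∈ S}. -/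
open Matrix

attribute [local instance] Matrix.linftyOpNormedRing Matrix.linftyOpNormedAlgebra

section Aux

variable {n : Type*} [Fintype n] [DecidableEq n]

private lemma pow_entry_nonneg {M : Matrix n n ℝ} (hM : ∀ i j, 0 ≤ M i j) :
    ∀ (k : ℕ) (i j : n), 0 ≤ (M ^ k) i j := by
  intro k
  induction k with
  | zero =>
    intro i j
    simp only [pow_zero, Matrix.one_apply]
    split <;> norm_num
  | succ m ih =>
    intro i j
    rw [pow_succ, Matrix.mul_apply]
    exact Finset.sum_nonneg fun x _ => mul_nonneg (ih i x) (hM x j)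

private lemma key_unit_nonneg (Q : Matrix n n ℝ) (hQ0 : ∀ i j, 0 ≤ Q i j)
    (hQ1 : ∀ i, ∑ j, Q i j = 1) {γ : ℝ} (hγ0 : 0 < γ) (hγ1 : γ < 1) :
    IsUnit (1 - γ • Q) ∧ ∀ i j, 0 ≤ (1 - γ • Q)⁻¹ i j := by
  haveI : CompleteSpace (Matrix n n ℝ) := FiniteDimensional.complete ℝ _
  have hQnorm : ‖Q‖ ≤ 1 := by
    rw [Matrix.linfty_opNorm_def]
    have : ((Finset.univ : Finset n).sup fun i : n => ∑ j : n, ‖Q i j‖₊ : NNReal) ≤ 1 := by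
      refine Finset.sup_le fun i _ => ?_
      have : ((∑ j : n, ‖Q i j‖₊ : NNReal) : ℝ) = ∑ j : n, Q i j := by
        push_cast
        refine Finset.sum_congr rfl fun j _ => ?_
        exact Real.norm_of_nonneg (hQ0 i j)
      have h1 : ((∑ j : n, ‖Q i j‖₊ : NNReal) : ℝ) ≤ ((1 : NNReal) : ℝ) := by
        rw [this, hQ1 i]; norm_num
      exact_mod_cast h1
    exact_mod_cast this
  have hnorm : ‖γ • Q‖ < 1 := by
    rw [norm_smul, Real.norm_eq_abs, abs_of_pos hγ0]
    calc γ * ‖Q‖ ≤ γ * 1 := by nlinarith [norm_nonneg Q]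
    _ < 1 := by linarith
  have hu : IsUnit (1 - γ • Q) := isUnit_one_sub_of_norm_lt_one hnorm
  refine ⟨hu, ?_⟩
  have hsum : HasSum (fun i : ℕ => (γ • Q) ^ i) (Ring.inverse (1 - γ • Q)) :=
    hasSum_geom_series_inverse _ hnorm
  intro i j
  rw [Matrix.nonsing_inv_eq_ringInverse]
  have hev : HasSum (fun k : ℕ => ((γ • Q) ^ k) i j) ((Ring.inverse (1 - γ • Q)) i j) := by
    let e : Matrix n n ℝ →ₗ[ℝ] ℝ :=
      { toFun := fun M => M i j
        map_add' := fun M N => rfl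
        map_smul' := fun c M => rfl }
    have := hsum.mapL (LinearMap.toContinuousLinearMap e)
    exact this
  have hterm : ∀ k : ℕ, 0 ≤ ((γ • Q) ^ k) i j := by
    intro k
    exact pow_entry_nonneg (fun a b => by
      simp only [Matrix.smul_apply, smul_eq_mul]
      exact mul_nonneg hγ0.le (hQ0 a b)) k i j
  exact hasSum_le hterm hasSum_zero hev

end Aux

/-- For an MDP with finite nonempty state and action sets `S, A`,
transition kernel `α`, discount `γ ∈ (0,1)` and initial distribution `μ`, the set of
discounted state-action frequencies `{η_γ^{τ,μ} : τ ∈ Δ_A^S}` equals the polyhedron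
`{η ≥ 0 : ∑_a η(s,a) - γ ∑_{s',a'} α(s|s',a') η(s',a') = (1-γ) μ(s) for all s}`. -/
theorem stmt12 {S A : Type*} [Fintype S] [Fintype A] [DecidableEq S] [DecidableEq A]
    [Nonempty S] [Nonempty A]
    (α : S → A → S → ℝ) (hα : ∀ s a, (∀ s', 0 ≤ α s a s') ∧ ∑ s', α s a s' = 1)
    (γ : ℝ) (hγ : γ ∈ Set.Ioo (0 : ℝ) 1)
    (μ : S → ℝ) (hμ : (∀ s, 0 ≤ μ s) ∧ ∑ s, μ s = 1) :
    {η : S × A → ℝ | ∃ τ : S → A → ℝ,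
        (∀ s, (∀ a, 0 ≤ τ s a) ∧ ∑ a, τ s a = 1) ∧
        η = (1 - γ) •
          ((1 - γ • (Matrix.of fun x y : S × A => α x.1 x.2 y.1 * τ y.1 y.2)ᵀ)⁻¹).mulVec
            (fun x => μ x.1 * τ x.1 x.2)} =
    {η : S × A → ℝ | (∀ x, 0 ≤ η x) ∧
        ∀ s, (∑ a, η (s, a)) - γ * ∑ x : S × A, α x.1 x.2 s * η x = (1 - γ) * μ s} := by
  obtain ⟨hγ0, hγ1⟩ := hγ
  -- general facts about the matrix built from a policy τ
  have key : ∀ τ : S → A → ℝ, (∀ s, (∀ a, 0 ≤ τ s a) ∧ ∑ a, τ s a = 1) →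
      IsUnit (1 - γ • (Matrix.of fun x y : S × A => α x.1 x.2 y.1 * τ y.1 y.2)) ∧
      ∀ i j, 0 ≤ (1 - γ • (Matrix.of fun x y : S × A => α x.1 x.2 y.1 * τ y.1 y.2))⁻¹ i j := by
    intro τ hτ
    refine key_unit_nonneg _
      (fun (i j : S × A) => mul_nonneg ((hα i.1 i.2).1 j.1) ((hτ j.1).1 j.2))
      (fun (i : S × A) => ?_) hγ0 hγ1
    rw [Fintype.sum_prod_type]
    calc ∑ s' : S, ∑ a' : A, α i.1 i.2 s' * τ s' a'
        = ∑ s' : S, α i.1 i.2 s' * ∑ a' : A, τ s' a' := by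
          simp [Finset.mul_sum]
      _ = 1 := by simp [fun s' => (hτ s').2, (hα i.1 i.2).2]
  ext η
  simp only [Set.mem_setOf_eq]
  constructor
  · rintro ⟨τ, hτ, rfl⟩
    set Q : Matrix (S × A) (S × A) ℝ :=
      Matrix.of fun x y : S × A => α x.1 x.2 y.1 * τ y.1 y.2 with hQ
    obtain ⟨hu, hinv⟩ := key τ hτ
    have huT : IsUnit (1 - γ • Qᵀ) := by
      have : (1 - γ • Qᵀ) = (1 - γ • Q)ᵀ := by
        rw [Matrix.transpose_sub, Matrix.transpose_smul, Matrix.transpose_one]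
      rw [this, Matrix.isUnit_transpose]
      exact hu
    have hdet : IsUnit (1 - γ • Qᵀ).det := (Matrix.isUnit_iff_isUnit_det _).1 huT
    set η := (1 - γ) •
      ((1 - γ • Qᵀ)⁻¹).mulVec (fun x : S × A => μ x.1 * τ x.1 x.2) with hη
    have hinvT : ∀ i j, 0 ≤ ((1 - γ • Qᵀ)⁻¹) i j := by
      intro i j
      have : (1 - γ • Qᵀ)⁻¹ = ((1 - γ • Q)⁻¹)ᵀ := by
        have hT : (1 - γ • Qᵀ) = (1 - γ • Q)ᵀ := by
          rw [Matrix.transpose_sub, Matrix.transpose_smul, Matrix.transpose_one]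
        rw [hT, Matrix.transpose_nonsing_inv]
      rw [this]
      exact hinv j i
    constructor
    · intro x
      rw [hη]
      simp only [Pi.smul_apply, smul_eq_mul]
      refine mul_nonneg (by linarith) ?_
      rw [Matrix.mulVec, dotProduct]
      exact Finset.sum_nonneg fun y _ =>
        mul_nonneg (hinvT x y) (mul_nonneg (hμ.1 y.1) ((hτ y.1).1 y.2))
    · -- the linear constraint
      have hmv : (1 - γ • Qᵀ).mulVec η = (1 - γ) • (fun x : S × A => μ x.1 * τ x.1 x.2) := by
        rw [hη, Matrix.mulVec_smul, Matrix.mulVec_mulVec, Matrix.mul_nonsing_inv _ hdet,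
          Matrix.one_mulVec]
      intro s
      have hx : ∀ x : S × A, η x - γ * (τ x.1 x.2 * ∑ y : S × A, α y.1 y.2 x.1 * η y)
          = (1 - γ) * (μ x.1 * τ x.1 x.2) := by
        intro x
        have := congrFun hmv x
        rw [Matrix.sub_mulVec, Matrix.one_mulVec] at this
        simp only [Pi.sub_apply, Pi.smul_apply, smul_eq_mul] at this
        rw [← this]
        congr 1
        rw [Matrix.smul_mulVec]
        simp only [Pi.smul_apply, smul_eq_mul]
        congr 1
        rw [Matrix.mulVec, dotProduct, Finset.mul_sum]
        refine Finset.sum_congr rfl fun y _ => ?_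
        simp only [Matrix.transpose_apply, hQ, Matrix.of_apply]
        ring
      have hsumx := Finset.sum_congr rfl (fun a (_ : a ∈ (Finset.univ : Finset A)) => hx (s, a))
      simp only at hsumx
      rw [Finset.sum_sub_distrib] at hsumx
      have h1 : ∑ a : A, γ * (τ s a * ∑ y : S × A, α y.1 y.2 s * η y)
          = γ * ∑ y : S × A, α y.1 y.2 s * η y := by
        calc ∑ a : A, γ * (τ s a * ∑ y : S × A, α y.1 y.2 s * η y)
            = (γ * ∑ y : S × A, α y.1 y.2 s * η y) * ∑ a : A, τ s a := by
              rw [Finset.mul_sum]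
              exact Finset.sum_congr rfl fun a _ => by ring
          _ = γ * ∑ y : S × A, α y.1 y.2 s * η y := by rw [(hτ s).2, mul_one]
      have h2 : ∑ a : A, (1 - γ) * (μ s * τ s a) = (1 - γ) * μ s := by
        calc ∑ a : A, (1 - γ) * (μ s * τ s a)
            = ((1 - γ) * μ s) * ∑ a : A, τ s a := by
              rw [Finset.mul_sum]
              exact Finset.sum_congr rfl fun a _ => by ring
          _ = (1 - γ) * μ s := by rw [(hτ s).2, mul_one]
      rw [h1, h2] at hsumx
      exact hsumx
  · rintro ⟨hpos, hflow⟩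
    -- construct the policy
    set d : S → ℝ := fun s => ∑ a, η (s, a) with hd
    have hd0 : ∀ s, 0 ≤ d s := fun s => Finset.sum_nonneg fun a _ => hpos (s, a)
    set τ : S → A → ℝ := fun s a =>
      if d s = 0 then (Fintype.card A : ℝ)⁻¹ else η (s, a) / d s with hτdef
    have hcardA : (0 : ℝ) < (Fintype.card A : ℝ) := by
      have := Fintype.card_pos (α := A)
      exact_mod_cast this
    have hτ : ∀ s, (∀ a, 0 ≤ τ s a) ∧ ∑ a, τ s a = 1 := by
      intro s
      by_cases h : d s = 0
      · constructor
        · intro a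
          simp only [hτdef, h, if_pos]
          positivity
        · simp only [hτdef, h, if_pos]
          rw [Finset.sum_const, Finset.card_univ, nsmul_eq_mul]
          field_simp
      · constructor
        · intro a
          simp only [hτdef, h, if_false]
          exact div_nonneg (hpos (s, a)) (hd0 s)
        · simp only [hτdef, h, if_false]
          rw [← Finset.sum_div, div_eq_one_iff_eq h]
    have hτd : ∀ s a, τ s a * d s = η (s, a) := by
      intro s a
      by_cases h : d s = 0
      · have : η (s, a) = 0 := by
          have := Finset.sum_eq_zero_iff_of_nonneg
            (fun a (_ : a ∈ (Finset.univ : Finset A)) => hpos (s, a)) |>.1 h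
          exact this a (Finset.mem_univ a)
        rw [h, this, mul_zero]
      · simp only [hτdef, h, if_false]
        field_simp
    refine ⟨τ, hτ, ?_⟩
    set Q : Matrix (S × A) (S × A) ℝ :=
      Matrix.of fun x y : S × A => α x.1 x.2 y.1 * τ y.1 y.2 with hQ
    obtain ⟨hu, _⟩ := key τ hτ
    have huT : IsUnit (1 - γ • Qᵀ) := by
      have : (1 - γ • Qᵀ) = (1 - γ • Q)ᵀ := by
        rw [Matrix.transpose_sub, Matrix.transpose_smul, Matrix.transpose_one]
      rw [this, Matrix.isUnit_transpose]
      exact hu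
    have hdet : IsUnit (1 - γ • Qᵀ).det := (Matrix.isUnit_iff_isUnit_det _).1 huT
    -- show the matrix equation
    have hmv : (1 - γ • Qᵀ).mulVec η = (1 - γ) • (fun x : S × A => μ x.1 * τ x.1 x.2) := by
      funext x
      rw [Matrix.sub_mulVec, Matrix.one_mulVec]
      simp only [Pi.sub_apply, Pi.smul_apply, smul_eq_mul]
      have hQT : ((γ • Qᵀ).mulVec η) x = γ * (τ x.1 x.2 * ∑ y : S × A, α y.1 y.2 x.1 * η y) := by
        rw [Matrix.smul_mulVec]
        simp only [Pi.smul_apply, smul_eq_mul]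
        congr 1
        rw [Matrix.mulVec, dotProduct, Finset.mul_sum]
        refine Finset.sum_congr rfl fun y _ => ?_
        simp only [Matrix.transpose_apply, hQ, Matrix.of_apply]
        ring
      rw [hQT]
      -- η x - γ τ x (∑ α η) = (1-γ) μ τ
      have hG : d x.1 - γ * ∑ y : S × A, α y.1 y.2 x.1 * η y = (1 - γ) * μ x.1 := hflow x.1
      have hηx : η x = τ x.1 x.2 * d x.1 := (hτd x.1 x.2).symm
      have : γ * ∑ y : S × A, α y.1 y.2 x.1 * η y = d x.1 - (1 - γ) * μ x.1 := by linarith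
      rw [hηx]
      linear_combination (τ x.1 x.2) * hG
    -- invert
    calc η = (1 - γ • Qᵀ)⁻¹.mulVec ((1 - γ • Qᵀ).mulVec η) := by
          rw [Matrix.mulVec_mulVec, Matrix.nonsing_inv_mul _ hdet, Matrix.one_mulVec]
      _ = (1 - γ) • (1 - γ • Qᵀ)⁻¹.mulVec (fun x : S × A => μ x.1 * τ x.1 x.2) := by
          rw [hmv, Matrix.mulVec_smul]
end

section
/- Consider an MDP with nonempty finite state and action sets S, A, transition kernel α, discount factor γ ∈ (0,1) and initial distribution μ ∈ Δ_S. Let η ∈ ℝ^{S×A} satisfy η(s,a) ≥ 0 for all (s,a) and Σ_a η(s,a) − γ·Σ_{s',a'} α(s|s',a')·η(s',a') = (1−γ)·μ(s) for all s ∈ S, and let ρ(s) = Σ_a η(s,a). Let τ ∈ Δ_A^S be any policy such that τ(a|s) = η(s,a)/ρ(s) whenever ρ(s) > 0 (and τ(·|s) arbitrary in Δ_A when ρ(s) = 0). Then η = γ·P_τᵀη + (1−γ)(μ∗τ), and consequently η = η_γ^{τ,μ}. -/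
/-!
Nonnegativity of `η` makes it factor as `η(s,a) = τ(a|s) ρ(s)` (where `ρ(s) = 0` the whole row of
`η` vanishes), so multiplying the stationarity equation at `s` by `τ(a|s)` gives the flow equation
`η = γ P_τᵀ η + (1-γ)(μ∗τ)`. Since `P_τᵀ` is column stochastic and `γ < 1`, the matrix
`1 - γ P_τᵀ` is strictly diagonally dominant, hence invertible by Gershgorin's theorem, and the
flow equation can be solved for `η`.
-/

open Matrix

namespace Matrix

variable {n : Type*} [Fintype n] [DecidableEq n]

theorem isUnit_det_one_sub_smul_of_mem_colStochastic {P : Matrix n n ℝ}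
    (hP : P ∈ colStochastic ℝ n) {γ : ℝ} (hγ : |γ| < 1) : IsUnit (1 - γ • P).det := by
  refine isUnit_iff_ne_zero.2 (det_ne_zero_of_sum_col_lt_diag fun k => ?_)
  have hoff : ∑ i ∈ Finset.univ.erase k, ‖(1 - γ • P) i k‖ = |γ| * (1 - P k k) := by
    rw [← sum_col_of_mem_colStochastic hP k, ← Finset.sum_erase_add _ _ (Finset.mem_univ k),
      add_sub_cancel_right, Finset.mul_sum]
    refine Finset.sum_congr rfl fun i hi => ?_
    simp [one_apply_ne (Finset.ne_of_mem_erase hi),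
      abs_of_nonneg (nonneg_of_mem_colStochastic hP)]
  have hdiag : 1 - |γ| * P k k ≤ ‖(1 - γ • P) k k‖ :=
    calc 1 - |γ| * P k k ≤ 1 - γ * P k k := by
          gcongr
          exacts [nonneg_of_mem_colStochastic hP, le_abs_self γ]
      _ ≤ ‖(1 - γ • P) k k‖ := by simpa using le_abs_self (1 - γ * P k k)
  rw [hoff]
  linarith

theorem eq_smul_inv_mulVec_of_eq_smul_mulVec_add {R : Type*} [CommRing R] {M : Matrix n n R}
    {γ c : R} (hM : IsUnit (1 - γ • M).det) {η ν : n → R}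
    (h : η = γ • M *ᵥ η + c • ν) : η = c • (1 - γ • M)⁻¹ *ᵥ ν := by
  have hres : (1 - γ • M) *ᵥ η = c • ν := by
    rw [sub_mulVec, one_mulVec, smul_mulVec, sub_eq_iff_eq_add']
    exact h
  rw [← mulVec_smul, ← hres, mulVec_mulVec, nonsing_inv_mul _ hM, one_mulVec]

end Matrix

section MDP

variable {S A : Type*}

def stateActionKernel (α : S → A → S → ℝ) (τ : S → A → ℝ) : Matrix (S × A) (S × A) ℝ :=
  Matrix.of fun x y => α x.1 x.2 y.1 * τ y.1 y.2

theorem apply_eq_mul_sum_of_conditional [Fintype A] {η : S × A → ℝ} (hη : ∀ x, 0 ≤ η x)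
    {τ : S → A → ℝ}
    (hcond : ∀ s, 0 < ∑ a, η (s, a) → ∀ a, τ s a = η (s, a) / ∑ a, η (s, a)) (s : S) (a : A) :
    η (s, a) = τ s a * ∑ a', η (s, a') := by
  rcases (Finset.sum_nonneg fun a' _ => hη (s, a')).lt_or_eq with hpos | hzero
  · rw [hcond s hpos a, div_mul_cancel₀ _ hpos.ne']
  · rw [← hzero, mul_zero]
    exact (Finset.sum_eq_zero_iff_of_nonneg fun a' _ => hη (s, a')).1 hzero.symm a
      (Finset.mem_univ a)

variable [Fintype S] [Fintype A]

theorem stateActionKernel_mem_rowStochastic [DecidableEq S] [DecidableEq A]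
    {α : S → A → S → ℝ} (hα : ∀ s a, (∀ s', 0 ≤ α s a s') ∧ ∑ s', α s a s' = 1)
    {τ : S → A → ℝ} (hτ : ∀ s, (∀ a, 0 ≤ τ s a) ∧ ∑ a, τ s a = 1) :
    stateActionKernel α τ ∈ rowStochastic ℝ (S × A) := by
  refine mem_rowStochastic_iff_sum.2
    ⟨fun x y => mul_nonneg ((hα x.1 x.2).1 y.1) ((hτ y.1).1 y.2), fun x => ?_⟩
  simp only [stateActionKernel, of_apply, Fintype.sum_prod_type, ← Finset.mul_sum, (hτ _).2,
    mul_one, (hα x.1 x.2).2]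

theorem stateActionKernel_transpose_mulVec_apply (α : S → A → S → ℝ) (τ : S → A → ℝ)
    (η : S × A → ℝ) (s : S) (a : A) :
    ((stateActionKernel α τ)ᵀ *ᵥ η) (s, a) = τ s a * ∑ x : S × A, α x.1 x.2 s * η x := by
  simp only [mulVec, dotProduct, transpose_apply, stateActionKernel, of_apply, Finset.mul_sum]
  exact Finset.sum_congr rfl fun x _ => by ring

theorem eq_bellman_flow_of_stationary {α : S → A → S → ℝ} {γ : ℝ} {μ : S → ℝ}
    {η : S × A → ℝ} (hη : ∀ x, 0 ≤ η x)
    (hstat : ∀ s, (∑ a, η (s, a)) - γ * ∑ x : S × A, α x.1 x.2 s * η x = (1 - γ) * μ s)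
    {τ : S → A → ℝ} (hcond : ∀ s, 0 < ∑ a, η (s, a) → ∀ a, τ s a = η (s, a) / ∑ a, η (s, a)) :
    η = γ • (stateActionKernel α τ)ᵀ *ᵥ η + (1 - γ) • fun x => μ x.1 * τ x.1 x.2 := by
  funext ⟨s, a⟩
  rw [apply_eq_mul_sum_of_conditional hη hcond s a, eq_add_of_sub_eq (hstat s)]
  simp only [Pi.add_apply, Pi.smul_apply, smul_eq_mul,
    stateActionKernel_transpose_mulVec_apply]
  ring

end MDP

theorem stmt13_general {S A : Type*} [Fintype S] [Fintype A] [DecidableEq S] [DecidableEq A]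
    (α : S → A → S → ℝ) (hα : ∀ s a, (∀ s', 0 ≤ α s a s') ∧ ∑ s', α s a s' = 1)
    (γ : ℝ) (hγ : γ ∈ Set.Ioo (0 : ℝ) 1)
    (μ : S → ℝ)
    (η : S × A → ℝ) (hηpos : ∀ x, 0 ≤ η x)
    (hstat : ∀ s, (∑ a, η (s, a)) - γ * ∑ x : S × A, α x.1 x.2 s * η x = (1 - γ) * μ s)
    (ρ : S → ℝ) (hρ : ∀ s, ρ s = ∑ a, η (s, a))
    (τ : S → A → ℝ) (hτ : ∀ s, (∀ a, 0 ≤ τ s a) ∧ ∑ a, τ s a = 1)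
    (hcond : ∀ s, 0 < ρ s → ∀ a, τ s a = η (s, a) / ρ s) :
    let Pτ : Matrix (S × A) (S × A) ℝ := Matrix.of fun x y => α x.1 x.2 y.1 * τ y.1 y.2
    η = γ • (Pτᵀ).mulVec η + (1 - γ) • (fun x => μ x.1 * τ x.1 x.2) ∧
    η = (1 - γ) • ((1 - γ • Pτᵀ)⁻¹).mulVec (fun x => μ x.1 * τ x.1 x.2) := by
  intro Pτ
  obtain rfl : ρ = fun s => ∑ a, η (s, a) := funext hρ
  have hflow : η = γ • Pτᵀ *ᵥ η + (1 - γ) • fun x => μ x.1 * τ x.1 x.2 :=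
    eq_bellman_flow_of_stationary hηpos hstat hcond
  have hcol : Pτᵀ ∈ colStochastic ℝ (S × A) :=
    transpose_mem_colStochastic_iff_mem_rowStochastic.2
      (stateActionKernel_mem_rowStochastic hα hτ)
  have hγ_abs : |γ| < 1 := abs_lt.2 ⟨by linarith [hγ.1], hγ.2⟩
  exact ⟨hflow, eq_smul_inv_mulVec_of_eq_smul_mulVec_add
    (isUnit_det_one_sub_smul_of_mem_colStochastic hcol hγ_abs) hflow⟩

/-- For an MDP with finite nonempty `S, A`, kernel `α`, `γ ∈ (0,1)` and
`μ ∈ Δ_S`: if `η ≥ 0` satisfies the stationarity equations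
`∑_a η(s,a) - γ ∑_{s',a'} α(s|s',a') η(s',a') = (1-γ) μ(s)`, `ρ(s) = ∑_a η(s,a)`, and
`τ ∈ Δ_A^S` is any policy with `τ(a|s) = η(s,a)/ρ(s)` whenever `ρ(s) > 0`, then
`η = γ P_τᵀ η + (1-γ)(μ∗τ)` and consequently `η = η_γ^{τ,μ}`. -/
theorem stmt13 {S A : Type*} [Fintype S] [Fintype A] [DecidableEq S] [DecidableEq A]
    [Nonempty S] [Nonempty A]
    (α : S → A → S → ℝ) (hα : ∀ s a, (∀ s', 0 ≤ α s a s') ∧ ∑ s', α s a s' = 1)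
    (γ : ℝ) (hγ : γ ∈ Set.Ioo (0 : ℝ) 1)
    (μ : S → ℝ) (hμ : (∀ s, 0 ≤ μ s) ∧ ∑ s, μ s = 1)
    (η : S × A → ℝ) (hηpos : ∀ x, 0 ≤ η x)
    (hstat : ∀ s, (∑ a, η (s, a)) - γ * ∑ x : S × A, α x.1 x.2 s * η x = (1 - γ) * μ s)
    (ρ : S → ℝ) (hρ : ∀ s, ρ s = ∑ a, η (s, a))
    (τ : S → A → ℝ) (hτ : ∀ s, (∀ a, 0 ≤ τ s a) ∧ ∑ a, τ s a = 1)
    (hcond : ∀ s, 0 < ρ s → ∀ a, τ s a = η (s, a) / ρ s) :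
    let Pτ : Matrix (S × A) (S × A) ℝ := Matrix.of fun x y => α x.1 x.2 y.1 * τ y.1 y.2
    η = γ • (Pτᵀ).mulVec η + (1 - γ) • (fun x => μ x.1 * τ x.1 x.2) ∧
    η = (1 - γ) • ((1 - γ • Pτᵀ)⁻¹).mulVec (fun x => μ x.1 * τ x.1 x.2) :=
  stmt13_general α hα γ hγ μ η hηpos hstat ρ hρ τ hτ hcond
end

section
/- Let S, O, A be nonempty finite sets and let β ∈ ℝ^{S×O} be a row-stochastic matrix (entries nonnegative, rows summing to 1) with linearly independent columns, so that βᵀβ is invertible; write β⁺ = (βᵀβ)⁻¹βᵀ. Then the effective policy polytope Δ_A^{S,β} := {β·π : π ∈ Δ_A^O} (matrix product, giving an element of ℝ^{S×A}) satisfies the two descriptions: Δ_A^{S,β} = Δ_A^S ∩ U ∩ C = U ∩ C ∩ D, where U = {τ ∈ ℝ^{S×A} : every column of τ lies in the column space of β}, C = {τ ∈ ℝ^{S×A} : (β⁺τ)(o,a) ≥ 0 for all o ∈ O, a ∈ A}, and D = {τ ∈ ℝ^{S×A} : Σ_a (β⁺τ)(o,a) = 1 for all o ∈ O}. -/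
/-!
Since `β⁺β = 1`, `π ↦ βπ` has the left inverse `τ ↦ β⁺τ`: a matrix `τ` is of the form
`βπ` exactly when its columns lie in the column space of `β`, and then `π = β⁺τ`. So `τ` lies in
the effective policy polytope iff `τ ∈ U` and `β⁺τ` is row-stochastic, i.e. `τ ∈ U ∩ C ∩ D`.
For the other description, `β` fixes the all-ones vector, hence so does `β⁺`, and therefore
`β⁺` preserves unit row sums: `Δ_A^S ∩ U ∩ C ⊆ D`.
-/

open Matrix

namespace Matrix

variable {m n p R : Type*} [Fintype n]

section CommSemiring

variable [CommSemiring R]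

lemma exists_mul_eq_iff_forall_col_mem_range {B : Matrix m n R} {τ : Matrix m p R} :
    (∃ X : Matrix n p R, B * X = τ) ↔ ∀ j, (fun i => τ i j) ∈ LinearMap.range B.mulVecLin := by
  constructor
  · rintro ⟨X, rfl⟩ j
    exact ⟨fun k => X k j, by ext i; simp [mul_apply, mulVec, dotProduct]⟩
  · intro h
    choose x hx using h
    refine ⟨of fun k j => x j k, ?_⟩
    ext i j
    simpa [mul_apply, mulVec, dotProduct] using congrFun (hx j) i

lemma mulVec_one_eq_one_iff {M : Matrix m n R} : M *ᵥ 1 = 1 ↔ ∀ i, ∑ j, M i j = 1 := by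
  simp [funext_iff, mulVec, dotProduct]

variable [Fintype m] [DecidableEq n] {B : Matrix m n R} {L : Matrix n m R}

lemma image_mul_left_eq_of_mul_eq_one (hLB : L * B = 1) (P : Set (Matrix n p R)) :
    (B * ·) '' P = {τ : Matrix m p R | (∃ X : Matrix n p R, B * X = τ) ∧ L * τ ∈ P} := by
  ext τ
  constructor
  · rintro ⟨π, hπ, rfl⟩
    exact ⟨⟨π, rfl⟩, by rwa [← Matrix.mul_assoc, hLB, Matrix.one_mul]⟩
  · rintro ⟨⟨X, rfl⟩, hX⟩
    rw [← Matrix.mul_assoc, hLB, Matrix.one_mul] at hX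
    exact ⟨X, hX, rfl⟩

lemma mul_mulVec_one_of_mul_eq_one [Fintype p] (hLB : L * B = 1) (hB : B *ᵥ 1 = 1)
    {τ : Matrix m p R} (hτ : τ *ᵥ 1 = 1) : (L * τ) *ᵥ 1 = 1 := by
  rw [← mulVec_mulVec, hτ, ← hB, mulVec_mulVec, hLB, one_mulVec]

end CommSemiring

lemma mul_apply_nonneg [Semiring R] [PartialOrder R] [IsOrderedRing R] {M : Matrix m n R}
    {N : Matrix n p R} (hM : ∀ i j, 0 ≤ M i j) (hN : ∀ i j, 0 ≤ N i j) (i : m) (k : p) :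
    0 ≤ (M * N) i k :=
  Finset.sum_nonneg fun j _ => mul_nonneg (hM i j) (hN j k)

section LinearOrderedField

variable [Fintype m] [Field R] [LinearOrder R] [IsStrictOrderedRing R] [DecidableEq n]

lemma isUnit_transpose_mul_self_of_linearIndependent {A : Matrix m n R}
    (hA : LinearIndependent R A.col) : IsUnit (Aᵀ * A) := by
  rw [← mulVec_injective_iff_isUnit, ← coe_mulVecLin, ← LinearMap.ker_eq_bot,
    ker_mulVecLin_transpose_mul_self, LinearMap.ker_eq_bot, coe_mulVecLin, mulVec_injective_iff]
  exact hA

lemma transpose_mul_self_inv_mul_transpose_mul_self {A : Matrix m n R}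
    (hA : LinearIndependent R A.col) : (Aᵀ * A)⁻¹ * Aᵀ * A = 1 := by
  rw [Matrix.mul_assoc, nonsing_inv_mul _
    ((isUnit_iff_isUnit_det _).mp (isUnit_transpose_mul_self_of_linearIndependent hA))]

end LinearOrderedField

end Matrix

theorem stmt14_general {S O A : Type*} [Fintype S] [Fintype O] [Fintype A]
    [DecidableEq O]
    (β : Matrix S O ℝ) (hβpos : ∀ s o, 0 ≤ β s o) (hβrow : ∀ s, ∑ o, β s o = 1)
    (hβli : LinearIndependent ℝ (fun o : O => βᵀ o)) :
    let βp : Matrix O S ℝ := (βᵀ * β)⁻¹ * βᵀ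
    let ΔAO : Set (Matrix O A ℝ) := {π | (∀ o a, 0 ≤ π o a) ∧ ∀ o, ∑ a, π o a = 1}
    let ΔAS : Set (Matrix S A ℝ) := {τ | (∀ s a, 0 ≤ τ s a) ∧ ∀ s, ∑ a, τ s a = 1}
    let U : Set (Matrix S A ℝ) := {τ | ∀ a, (fun s => τ s a) ∈ LinearMap.range β.mulVecLin}
    let Cc : Set (Matrix S A ℝ) := {τ | ∀ o a, 0 ≤ (βp * τ) o a}
    let Dd : Set (Matrix S A ℝ) := {τ | ∀ o, ∑ a, (βp * τ) o a = 1}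
    (fun π => β * π) '' ΔAO = ΔAS ∩ U ∩ Cc ∧
    (fun π => β * π) '' ΔAO = U ∩ Cc ∩ Dd := by
  intro βp ΔAO ΔAS U Cc Dd
  have hβ1 : β *ᵥ 1 = 1 := mulVec_one_eq_one_iff.mpr hβrow
  have hβpβ : βp * β = 1 := transpose_mul_self_inv_mul_transpose_mul_self hβli
  have himage : (β * ·) '' ΔAO = U ∩ Cc ∩ Dd := by
    rw [image_mul_left_eq_of_mul_eq_one hβpβ]
    ext τ
    simp only [exists_mul_eq_iff_forall_col_mem_range]
    exact and_assoc.symm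
  have himage_sub : (β * ·) '' ΔAO ⊆ ΔAS := by
    rintro _ ⟨π, hπ, rfl⟩
    refine ⟨mul_apply_nonneg hβpos hπ.1, mulVec_one_eq_one_iff.mp ?_⟩
    rw [← mulVec_mulVec, mulVec_one_eq_one_iff.mpr hπ.2, hβ1]
  have hsub_D : ΔAS ∩ U ∩ Cc ⊆ Dd := fun τ hτ => mulVec_one_eq_one_iff.mp
    (mul_mulVec_one_of_mul_eq_one hβpβ hβ1 (mulVec_one_eq_one_iff.mpr hτ.1.1.2))
  refine ⟨subset_antisymm (fun τ hτ => ?_) (fun τ hτ => ?_), himage⟩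
  · obtain ⟨⟨hU, hC⟩, -⟩ := himage ▸ hτ
    exact ⟨⟨himage_sub hτ, hU⟩, hC⟩
  · exact himage ▸ ⟨⟨hτ.1.2, hτ.2⟩, hsub_D hτ⟩

/-- Let `S, O, A` be nonempty finite sets and `β ∈ ℝ^{S×O}` a
row-stochastic matrix with linearly independent columns; write `β⁺ = (βᵀβ)⁻¹βᵀ`. Then the
effective policy polytope `Δ_A^{S,β} = {βπ : π ∈ Δ_A^O}` equals both `Δ_A^S ∩ U ∩ C` and
`U ∩ C ∩ D`, where `U` is the set of `τ` whose columns lie in the column space of `β`,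
`C = {τ : β⁺τ ≥ 0}` and `D = {τ : ∑_a (β⁺τ)(o,a) = 1 for all o}`. -/
theorem stmt14 {S O A : Type*} [Fintype S] [Fintype O] [Fintype A]
    [DecidableEq S] [DecidableEq O] [Nonempty S] [Nonempty O] [Nonempty A]
    (β : Matrix S O ℝ) (hβpos : ∀ s o, 0 ≤ β s o) (hβrow : ∀ s, ∑ o, β s o = 1)
    (hβli : LinearIndependent ℝ (fun o : O => βᵀ o)) :
    let βp : Matrix O S ℝ := (βᵀ * β)⁻¹ * βᵀ
    let ΔAO : Set (Matrix O A ℝ) := {π | (∀ o a, 0 ≤ π o a) ∧ ∀ o, ∑ a, π o a = 1}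
    let ΔAS : Set (Matrix S A ℝ) := {τ | (∀ s a, 0 ≤ τ s a) ∧ ∀ s, ∑ a, τ s a = 1}
    let U : Set (Matrix S A ℝ) := {τ | ∀ a, (fun s => τ s a) ∈ LinearMap.range β.mulVecLin}
    let Cc : Set (Matrix S A ℝ) := {τ | ∀ o a, 0 ≤ (βp * τ) o a}
    let Dd : Set (Matrix S A ℝ) := {τ | ∀ o, ∑ a, (βp * τ) o a = 1}
    (fun π => β * π) '' ΔAO = ΔAS ∩ U ∩ Cc ∧
    (fun π => β * π) '' ΔAO = U ∩ Cc ∩ Dd :=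
  stmt14_general β hβpos hβrow hβli
end

section
/- Let S and A be nonempty finite sets, let τ ∈ ℝ^{S×A} satisfy τ(s,a) ≥ 0 and Σ_a τ(s,a) = 1 for every s, let ρ ∈ ℝ^S have ρ(s) ≥ 0 for all s, and set η(s,a) = ρ(s)·τ(s,a). Let b ∈ ℝ^{S×A}, c ∈ ℝ, and S₀ = {s ∈ S : b(s,a) ≠ 0 for some a ∈ A}. If Σ_{s,a} b(s,a)·τ(s,a) ≥ c, then Σ_{s∈S₀} Σ_a b(s,a)·η(s,a)·∏_{s'∈S₀∖{s}} (Σ_{a'} η(s',a')) − c·∏_{s'∈S₀} (Σ_{a'} η(s',a')) ≥ 0. Conversely, if additionally ρ(s) > 0 for all s ∈ S₀, then this polynomial inequality in η implies Σ_{s,a} b(s,a)·τ(s,a) ≥ c. -/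
/-!
Since every row of `τ` sums to `1`, the row sums of `η` are `∑ a', η s' a' = ρ s'`. Pulling
`ρ s` out of `η s a` completes `∏_{S₀ ∖ {s}} ρ` to `∏_{S₀} ρ`, so the polynomial expression
factors as `(∑_{s ∈ S₀} ∑_a b(s,a) τ(s,a) - c) · ∏_{s ∈ S₀} ρ(s)`, and states outside `S₀`
contribute nothing to the linear sum. Both directions then come down to the sign of a product
with a factor `∏_{S₀} ρ` that is nonnegative, and positive under the extra hypothesis.
-/

open Finset

theorem Finset.sum_mul_mul_prod_erase {ι R : Type*} [CommSemiring R] [DecidableEq ι]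
    (T : Finset ι) (x ρ : ι → R) :
    ∑ s ∈ T, x s * ρ s * ∏ s' ∈ T.erase s, ρ s' = (∑ s ∈ T, x s) * ∏ s ∈ T, ρ s := by
  rw [sum_mul]
  exact sum_congr rfl fun s hs => by rw [mul_assoc, mul_prod_erase T ρ hs]

theorem sum_mul_eq_sum_filter_exists_ne_zero {S A R : Type*} [Fintype S] [Fintype A]
    [NonUnitalNonAssocSemiring R] [DecidableEq R] (b τ : S → A → R) :
    ∑ s, ∑ a, b s a * τ s a = ∑ s with ∃ a, b s a ≠ 0, ∑ a, b s a * τ s a := by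
  refine (sum_filter_of_ne fun s _ hs => ?_).symm
  by_contra! hb
  exact hs (sum_eq_zero fun a _ => by rw [hb a, zero_mul])

theorem sum_mul_prod_erase_sub_eq {S A R : Type*} [Fintype A] [DecidableEq S] [CommRing R]
    (T : Finset S) (τ : S → A → R) (hτsum : ∀ s, ∑ a, τ s a = 1) (ρ : S → R)
    (η : S → A → R) (hη : ∀ s a, η s a = ρ s * τ s a) (b : S → A → R) (c : R) :
    (∑ s ∈ T, ∑ a, b s a * η s a * ∏ s' ∈ T.erase s, (∑ a', η s' a'))
      - c * ∏ s' ∈ T, (∑ a', η s' a')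
      = (∑ s ∈ T, ∑ a, b s a * τ s a - c) * ∏ s ∈ T, ρ s := by
  have hrow : ∀ s, ∑ a, η s a = ρ s := fun s => by simp only [hη, ← mul_sum, hτsum, mul_one]
  simp only [hrow]
  rw [sub_mul, ← sum_mul_mul_prod_erase T _ ρ]
  congr 1
  refine sum_congr rfl fun s _ => ?_
  rw [sum_mul, sum_mul]
  exact sum_congr rfl fun a _ => by rw [hη]; ring

theorem stmt16_general {S A : Type*} [Fintype S] [Fintype A] [DecidableEq S]
    (τ : S → A → ℝ) (hτsum : ∀ s, ∑ a, τ s a = 1)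
    (ρ : S → ℝ) (hρ : ∀ s, 0 ≤ ρ s)
    (η : S → A → ℝ) (hη : ∀ s a, η s a = ρ s * τ s a)
    (b : S → A → ℝ) (c : ℝ) :
    let S₀ : Finset S := Finset.univ.filter (fun s => ∃ a, b s a ≠ 0)
    ((∑ s, ∑ a, b s a * τ s a ≥ c) →
      (∑ s ∈ S₀, ∑ a, b s a * η s a * ∏ s' ∈ S₀.erase s, (∑ a', η s' a'))
        - c * ∏ s' ∈ S₀, (∑ a', η s' a') ≥ 0) ∧
    ((∀ s ∈ S₀, 0 < ρ s) →
      ((∑ s ∈ S₀, ∑ a, b s a * η s a * ∏ s' ∈ S₀.erase s, (∑ a', η s' a'))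
        - c * ∏ s' ∈ S₀, (∑ a', η s' a') ≥ 0) →
      ∑ s, ∑ a, b s a * τ s a ≥ c) := by
  intro S₀
  rw [sum_mul_prod_erase_sub_eq S₀ τ hτsum ρ η hη b c, sum_mul_eq_sum_filter_exists_ne_zero b τ,
    ge_iff_le, ← sub_nonneg]
  refine ⟨fun h => mul_nonneg h (prod_nonneg fun s _ => hρ s), fun hpos h => ?_⟩
  exact (mul_nonneg_iff_of_pos_right (prod_pos hpos)).mp h

/-- Let `S, A` be nonempty finite sets, `τ` a policy, `ρ ≥ 0` state
weights and `η(s,a) = ρ(s)τ(s,a)`. Let `b ∈ ℝ^{S×A}`, `c ∈ ℝ` and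
`S₀ = {s : b(s,a) ≠ 0 for some a}`. If `∑_{s,a} b(s,a)τ(s,a) ≥ c` then
`∑_{s∈S₀} ∑_a b(s,a)η(s,a) ∏_{s'∈S₀∖{s}} (∑_{a'} η(s',a')) - c ∏_{s'∈S₀} (∑_{a'} η(s',a')) ≥ 0`;
conversely, if additionally `ρ(s) > 0` for all `s ∈ S₀`, the polynomial inequality implies
the linear one. -/
theorem stmt16 {S A : Type*} [Fintype S] [Fintype A] [DecidableEq S]
    [Nonempty S] [Nonempty A]
    (τ : S → A → ℝ) (hτpos : ∀ s a, 0 ≤ τ s a) (hτsum : ∀ s, ∑ a, τ s a = 1)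
    (ρ : S → ℝ) (hρ : ∀ s, 0 ≤ ρ s)
    (η : S → A → ℝ) (hη : ∀ s a, η s a = ρ s * τ s a)
    (b : S → A → ℝ) (c : ℝ) :
    let S₀ : Finset S := Finset.univ.filter (fun s => ∃ a, b s a ≠ 0)
    ((∑ s, ∑ a, b s a * τ s a ≥ c) →
      (∑ s ∈ S₀, ∑ a, b s a * η s a * ∏ s' ∈ S₀.erase s, (∑ a', η s' a'))
        - c * ∏ s' ∈ S₀, (∑ a', η s' a') ≥ 0) ∧
    ((∀ s ∈ S₀, 0 < ρ s) →
      ((∑ s ∈ S₀, ∑ a, b s a * η s a * ∏ s' ∈ S₀.erase s, (∑ a', η s' a'))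
        - c * ∏ s' ∈ S₀, (∑ a', η s' a') ≥ 0) →
      ∑ s, ∑ a, b s a * τ s a ≥ c) :=
  stmt16_general τ hτsum ρ hρ η hη b c
end

section
/- Consider an MDP with nonempty finite state and action sets S, A, transition kernel α, reward vector r ∈ ℝ^{S×A}, discount factor γ ∈ (0,1) and initial distribution μ ∈ Δ_S. Let τ₀, τ₁ ∈ Δ_A^S be two policies that differ on at most one state s̃ (i.e., τ₀(·|s) = τ₁(·|s) for all s ≠ s̃). For λ ∈ [0,1] let τ_λ = τ₀ + λ(τ₁ − τ₀), write p_λ = p_{τ_λ}, V_λ = (1−γ)(I − γ·p_λ)⁻¹ r_{τ_λ} and η_λ = η_γ^{τ_λ,μ}. Then for all λ ∈ [0,1]: det(I − γ·p_λ) = (1−λ)·det(I − γ·p₀) + λ·det(I − γ·p₁), and with c(λ) = det(I − γ·p₁)·λ / det(I − γ·p_λ) one has V_λ = V₀ + c(λ)·(V₁ − V₀) and η_λ = η₀ + c(λ)·(η₁ − η₀). -/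
open Matrix


lemma mul_vecMulVec {n : Type*} [Fintype n] (M : Matrix n n ℝ) (u h : n → ℝ) :
    M * vecMulVec u h = vecMulVec (M.mulVec u) h := by
  ext i j
  simp only [Matrix.mul_apply, vecMulVec_apply, Matrix.mulVec, dotProduct, Finset.sum_mul]
  exact Finset.sum_congr rfl fun k _ => by ring

lemma smul_vecMulVec {n : Type*} [Fintype n] (t : ℝ) (u h : n → ℝ) :
    vecMulVec (t • u) h = t • vecMulVec u h := by
  ext i j
  simp [vecMulVec_apply, mul_assoc]

lemma vecMulVec_mulVec {n : Type*} [Fintype n] (f h v : n → ℝ) :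
    (vecMulVec f h).mulVec v = (h ⬝ᵥ v) • f := by
  ext i
  simp only [Matrix.mulVec, dotProduct, vecMulVec_apply, Pi.smul_apply, smul_eq_mul,
    Finset.sum_mul, Finset.mul_sum]
  exact Finset.sum_congr rfl fun k _ => by ring

lemma key_det {n : Type*} [Fintype n] [DecidableEq n]
    (M₀ : Matrix n n ℝ) (f h : n → ℝ) (h0 : M₀.det ≠ 0) (t : ℝ) :
    (M₀ + t • vecMulVec f h).det = M₀.det * (1 + t * (h ⬝ᵥ M₀⁻¹.mulVec f)) := by
  have hMM : M₀.mulVec (t • M₀⁻¹.mulVec f) = t • f := by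
    rw [Matrix.mulVec_smul, Matrix.mulVec_mulVec, Matrix.mul_nonsing_inv _ (isUnit_iff_ne_zero.mpr h0), Matrix.one_mulVec]
  have hfact : M₀ + t • vecMulVec f h = M₀ * (1 + vecMulVec (t • M₀⁻¹.mulVec f) h) := by
    rw [Matrix.mul_add, Matrix.mul_one, _root_.mul_vecMulVec, hMM, _root_.smul_vecMulVec]
  rw [hfact, det_mul, vecMulVec_eq Unit, det_one_add_replicateCol_mul_replicateRow, dotProduct_smul, smul_eq_mul]
  try ring

lemma key_line {n : Type*} [Fintype n] [DecidableEq n]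
    (M : ℝ → Matrix n n ℝ) (f h : n → ℝ) (b : ℝ → n → ℝ) (β l : ℝ)
    (hM : ∀ t, M t = M 0 + t • vecMulVec f h)
    (hb : ∀ t, b t = b 0 + (t * β) • f)
    (h0 : (M 0).det ≠ 0) (h1 : (M 1).det ≠ 0) (hl : (M l).det ≠ 0) :
    (∀ t, (M t).det = (1 - t) * (M 0).det + t * (M 1).det) ∧
    (M l)⁻¹.mulVec (b l) = (M 0)⁻¹.mulVec (b 0) +
      ((M 1).det * l / (M l).det) • ((M 1)⁻¹.mulVec (b 1) - (M 0)⁻¹.mulVec (b 0)) := by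
  set M₀ := M 0 with hM₀
  set k := h ⬝ᵥ M₀⁻¹.mulVec f with hk
  have hdet : ∀ t, (M t).det = M₀.det * (1 + t * k) := fun t => by
    rw [hM t]; exact key_det M₀ f h h0 t
  have hdet1 : (M 1).det = M₀.det * (1 + k) := by rw [hdet 1]; ring
  have haffine : ∀ t, (M t).det = (1 - t) * (M 0).det + t * (M 1).det := fun t => by
    rw [hdet t, hdet1, ← hM₀]; ring
  refine ⟨haffine, ?_⟩
  have hk1 : 1 + k ≠ 0 := fun hc => h1 (by rw [hdet1, hc, mul_zero])
  have hkl : 1 + l * k ≠ 0 := fun hc => hl (by rw [hdet l, hc, mul_zero])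
  -- notation
  set x0 := M₀⁻¹.mulVec (b 0) with hx0def
  set x1 := (M 1)⁻¹.mulVec (b 1) with hx1def
  set c := (M 1).det * l / (M l).det with hc
  have hcval : c * (1 + l * k) = (1 + k) * l := by
    rw [hc, hdet l, hdet1]
    rw [div_mul_eq_mul_div, div_eq_iff (mul_ne_zero h0 hkl)]
    ring
  have hMx0 : M₀.mulVec x0 = b 0 := by
    rw [hx0def, Matrix.mulVec_mulVec, Matrix.mul_nonsing_inv _ (isUnit_iff_ne_zero.mpr h0),
      Matrix.one_mulVec]
  have hMx1 : (M 1).mulVec x1 = b 1 := by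
    rw [hx1def, Matrix.mulVec_mulVec, Matrix.mul_nonsing_inv _ (isUnit_iff_ne_zero.mpr h1),
      Matrix.one_mulVec]
  set a0 := h ⬝ᵥ x0 with ha0
  set a1 := h ⬝ᵥ x1 with ha1
  set β' := β - a1 with hβ'
  have hW : M₀.mulVec (x1 - x0) = β' • f := by
    have hM1e : M₀.mulVec x1 = (M 1).mulVec x1 - (h ⬝ᵥ x1) • f := by
      rw [hM 1, Matrix.add_mulVec, one_smul, _root_.vecMulVec_mulVec]
      abel
    rw [Matrix.mulVec_sub, hM1e, hMx1, hMx0, hb 1]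
    ext i
    simp [hβ']
    ring
  have hWinv : x1 - x0 = β' • (M₀⁻¹.mulVec f) := by
    have := congrArg (M₀⁻¹.mulVec) hW
    rwa [Matrix.mulVec_mulVec, Matrix.nonsing_inv_mul _ (isUnit_iff_ne_zero.mpr h0),
      Matrix.one_mulVec, Matrix.mulVec_smul] at this
  have hdW : h ⬝ᵥ (x1 - x0) = β' * k := by
    rw [hWinv, dotProduct_smul, smul_eq_mul, hk]
  have hβk : β' * (1 + k) = β - a0 := by
    have : a1 - a0 = β' * k := by rw [← hdW, ha1, ha0, dotProduct_sub]
    linear_combination -this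
  -- verify (M l) applied to the candidate equals b l
  have hmain : (M l).mulVec (x0 + c • (x1 - x0)) = b l := by
    have hdc : h ⬝ᵥ (x0 + c • (x1 - x0)) = a0 + c * (β' * k) := by
      rw [dotProduct_add, dotProduct_smul, smul_eq_mul, hdW, ha0]
    rw [hM l, Matrix.add_mulVec, Matrix.mulVec_add, Matrix.mulVec_smul, hW, hMx0,
      smul_mulVec, _root_.vecMulVec_mulVec, hdc, hb l]
    ext i
    simp only [Pi.add_apply, Pi.smul_apply, smul_eq_mul]
    have : c * β' + l * (a0 + c * (β' * k)) = l * β := by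
      have h2 : c * β' * (1 + l * k) = (1 + k) * l * β' := by
        rw [← hcval]; ring
      linear_combination h2 + l * hβk
    linear_combination f i * this
  have := congrArg ((M l)⁻¹.mulVec) hmain
  rw [Matrix.mulVec_mulVec, Matrix.nonsing_inv_mul _ (isUnit_iff_ne_zero.mpr hl),
    Matrix.one_mulVec] at this
  rw [← this]

/-- For an MDP with finite nonempty `S, A`, kernel `α`, reward `r`,
`γ ∈ (0,1)` and `μ ∈ Δ_S`, let `τ₀, τ₁` be policies differing on at most one state `s̃`,
and for `λ ∈ [0,1]` let `τ_λ = τ₀ + λ(τ₁ - τ₀)`, `p_λ = p_{τ_λ}`,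
`V_λ = (1-γ)(I - γ p_λ)⁻¹ r_{τ_λ}` and `η_λ = η_γ^{τ_λ,μ}`. Then
`det(I - γ p_λ) = (1-λ) det(I - γ p₀) + λ det(I - γ p₁)`, and with
`c(λ) = det(I - γ p₁) λ / det(I - γ p_λ)` one has `V_λ = V₀ + c(λ)(V₁ - V₀)` and
`η_λ = η₀ + c(λ)(η₁ - η₀)`. -/
theorem stmt17 {S A : Type*} [Fintype S] [Fintype A] [DecidableEq S] [DecidableEq A]
    [Nonempty S] [Nonempty A]
    (α : S → A → S → ℝ) (hα : ∀ s a, (∀ s', 0 ≤ α s a s') ∧ ∑ s', α s a s' = 1)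
    (r : S × A → ℝ) (γ : ℝ) (hγ : γ ∈ Set.Ioo (0 : ℝ) 1)
    (μ : S → ℝ) (hμ : (∀ s, 0 ≤ μ s) ∧ ∑ s, μ s = 1)
    (τ₀ τ₁ : S → A → ℝ)
    (hτ₀ : ∀ s, (∀ a, 0 ≤ τ₀ s a) ∧ ∑ a, τ₀ s a = 1)
    (hτ₁ : ∀ s, (∀ a, 0 ≤ τ₁ s a) ∧ ∑ a, τ₁ s a = 1)
    (st : S) (hdiff : ∀ s, s ≠ st → τ₀ s = τ₁ s) :
    let τ : ℝ → S → A → ℝ := fun l s a => τ₀ s a + l * (τ₁ s a - τ₀ s a)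
    let pm : ℝ → Matrix S S ℝ := fun l => Matrix.of fun s s' => ∑ a, τ l s a * α s a s'
    let V : ℝ → S → ℝ := fun l =>
      (1 - γ) • ((1 - γ • pm l)⁻¹).mulVec (fun s => ∑ a, τ l s a * r (s, a))
    let Pm : ℝ → Matrix (S × A) (S × A) ℝ := fun l =>
      Matrix.of fun x y => α x.1 x.2 y.1 * τ l y.1 y.2
    let ηm : ℝ → S × A → ℝ := fun l =>
      (1 - γ) • ((1 - γ • (Pm l)ᵀ)⁻¹).mulVec (fun x => μ x.1 * τ l x.1 x.2)
    ∀ l ∈ Set.Icc (0 : ℝ) 1,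
      (1 - γ • pm l).det = (1 - l) * (1 - γ • pm 0).det + l * (1 - γ • pm 1).det ∧
      V l = V 0 + ((1 - γ • pm 1).det * l / (1 - γ • pm l).det) • (V 1 - V 0) ∧
      ηm l = ηm 0 + ((1 - γ • pm 1).det * l / (1 - γ • pm l).det) • (ηm 1 - ηm 0) := by
  obtain ⟨hγ0, hγ1⟩ := hγ
  intro τ pm V Pm ηm l hl
  obtain ⟨hl0, hl1⟩ := hl
  have hsum : ∀ (g : A → ℝ) (t : ℝ) (s : S),
      ∑ a, (τ₀ s a + t * (τ₁ s a - τ₀ s a)) * g a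
        = (∑ a, τ₀ s a * g a) + t * ((∑ a, τ₁ s a * g a) - (∑ a, τ₀ s a * g a)) := by
    intro g t s
    rw [← Finset.sum_sub_distrib, Finset.mul_sum, ← Finset.sum_add_distrib]
    exact Finset.sum_congr rfl fun a _ => by ring
  have hτnn : ∀ t, 0 ≤ t → t ≤ 1 → ∀ s a, 0 ≤ τ t s a := by
    intro t ht0 ht1 s a
    simp only [τ]
    nlinarith [mul_nonneg ht0 ((hτ₁ s).1 a), mul_nonneg (sub_nonneg.mpr ht1) ((hτ₀ s).1 a)]
  have hτsum : ∀ (t : ℝ) (s : S), ∑ a, τ t s a = 1 := by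
    intro t s
    simp only [τ]
    rw [Finset.sum_add_distrib, ← Finset.mul_sum, Finset.sum_sub_distrib, (hτ₀ s).2, (hτ₁ s).2]
    ring
  -- V-side data
  set fV : S → ℝ := fun s => if s = st then 1 else 0 with hfV
  set hV : S → ℝ := fun s' =>
    γ * ((∑ a, τ₀ st a * α st a s') - (∑ a, τ₁ st a * α st a s')) with hhV
  set MV : ℝ → Matrix S S ℝ := fun t => 1 - γ • pm t with hMVdef
  set bV : ℝ → S → ℝ := fun t => (1 - γ) • (fun s => ∑ a, τ t s a * r (s, a)) with hbVdef
  set βV : ℝ := (1 - γ) * ((∑ a, τ₁ st a * r (st, a)) - (∑ a, τ₀ st a * r (st, a))) with hβV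
  have hpmapp : ∀ (t : ℝ) s s', pm t s s' = (∑ a, τ₀ s a * α s a s')
      + t * ((∑ a, τ₁ s a * α s a s') - (∑ a, τ₀ s a * α s a s')) := by
    intro t s s'
    simp only [pm, τ, Matrix.of_apply]
    exact hsum _ t s
  have hMV : ∀ t, MV t = MV 0 + t • vecMulVec fV hV := by
    intro t
    ext s s'
    simp only [hMVdef, Matrix.sub_apply, Matrix.smul_apply, Matrix.add_apply,
      vecMulVec_apply, smul_eq_mul, hfV, hhV]
    rw [hpmapp t s s', hpmapp 0 s s']
    by_cases hs : s = st
    · subst hs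
      rw [if_pos rfl]
      ring
    · rw [if_neg hs, hdiff s hs]
      ring
  have hbVline : ∀ t, bV t = bV 0 + (t * βV) • fV := by
    intro t
    ext s
    simp only [hbVdef, Pi.smul_apply, Pi.add_apply, smul_eq_mul, τ, hfV, hβV]
    rw [hsum (fun a => r (s, a)) t s, hsum (fun a => r (s, a)) 0 s]
    by_cases hs : s = st
    · subst hs
      rw [if_pos rfl]
      ring
    · rw [if_neg hs, hdiff s hs]
      ring
  have hdetV : ∀ t, 0 ≤ t → t ≤ 1 → (MV t).det ≠ 0 := by
    intro t ht0 ht1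
    apply det_ne_zero_of_sum_row_lt_diag
    intro s
    have hpnn : ∀ j, 0 ≤ pm t s j := by
      intro j
      simp only [pm, Matrix.of_apply]
      exact Finset.sum_nonneg fun a _ => mul_nonneg (hτnn t ht0 ht1 s a) ((hα s a).1 j)
    have hpsum : ∑ j, pm t s j = 1 := by
      simp only [pm, Matrix.of_apply]
      rw [Finset.sum_comm]
      calc ∑ a, ∑ j, τ t s a * α s a j = ∑ a, τ t s a :=
            Finset.sum_congr rfl fun a _ => by rw [← Finset.mul_sum, (hα s a).2, mul_one]
        _ = 1 := hτsum t s
    have hple : pm t s s ≤ 1 := by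
      rw [← hpsum]
      exact Finset.single_le_sum (fun j _ => hpnn j) (Finset.mem_univ s)
    have hoff : ∀ j ∈ Finset.univ.erase s, ‖MV t s j‖ = γ * pm t s j := by
      intro j hj
      have hjs : s ≠ j := Ne.symm (Finset.mem_erase.mp hj).1
      simp only [hMVdef, Matrix.sub_apply, Matrix.smul_apply, smul_eq_mul,
        Matrix.one_apply_ne hjs, Real.norm_eq_abs, zero_sub, abs_neg]
      exact abs_of_nonneg (mul_nonneg (le_of_lt hγ0) (hpnn j))
    have hdiag : ‖MV t s s‖ = 1 - γ * pm t s s := by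
      simp only [hMVdef, Matrix.sub_apply, Matrix.smul_apply, smul_eq_mul,
        Matrix.one_apply_eq, Real.norm_eq_abs]
      rw [abs_of_nonneg]
      nlinarith [hple, hpnn s]
    rw [Finset.sum_congr rfl hoff, hdiag, ← Finset.mul_sum,
      Finset.sum_erase_eq_sub (Finset.mem_univ s), hpsum]
    nlinarith [hple, hpnn s]
  have h0V := hdetV 0 le_rfl zero_le_one
  have h1V := hdetV 1 zero_le_one le_rfl
  have hlV := hdetV l hl0 hl1
  obtain ⟨haffV, hlineV⟩ := key_line MV fV hV bV βV l hMV hbVline h0V h1V hlV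
  have hVx : ∀ t, V t = (MV t)⁻¹.mulVec (bV t) := by
    intro t
    simp only [V, hbVdef, hMVdef]
    rw [Matrix.mulVec_smul]
  -- η-side data
  set fη : S × A → ℝ := fun x => τ₁ x.1 x.2 - τ₀ x.1 x.2 with hfη
  set hη : S × A → ℝ := fun y => -(γ * α y.1 y.2 st) with hhη
  set Mη : ℝ → Matrix (S × A) (S × A) ℝ := fun t => 1 - γ • (Pm t)ᵀ with hMηdef
  set bη : ℝ → S × A → ℝ := fun t => (1 - γ) • (fun x : S × A => μ x.1 * τ t x.1 x.2) with hbηdef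
  set βη : ℝ := (1 - γ) * μ st with hβη
  have hMη : ∀ t, Mη t = Mη 0 + t • vecMulVec fη hη := by
    intro t
    ext x y
    simp only [hMηdef, Matrix.sub_apply, Matrix.smul_apply, Matrix.add_apply,
      Matrix.transpose_apply, Matrix.of_apply, vecMulVec_apply, smul_eq_mul, Pm, τ, hfη, hhη]
    by_cases hx : x.1 = st
    · rw [hx]
      ring
    · rw [show τ₁ x.1 = τ₀ x.1 from (hdiff x.1 hx).symm]
      ring
  have hbηline : ∀ t, bη t = bη 0 + (t * βη) • fη := by
    intro t
    ext x
    simp only [hbηdef, Pi.smul_apply, Pi.add_apply, smul_eq_mul, τ, hfη, hβη]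
    by_cases hx : x.1 = st
    · rw [hx]
      ring
    · rw [show τ₁ x.1 = τ₀ x.1 from (hdiff x.1 hx).symm]
      ring
  have hdeteq : ∀ t, (Mη t).det = (MV t).det := by
    intro t
    set B : Matrix (S × A) S ℝ := Matrix.of fun x s' => γ * α x.1 x.2 s' with hB
    set C : Matrix S (S × A) ℝ :=
      Matrix.of (fun s (y : S × A) => if y.1 = s then τ t y.1 y.2 else 0) with hC
    have hBC : B * C = γ • Pm t := by
      ext x y
      simp only [hB, hC, Matrix.mul_apply, Matrix.of_apply, Matrix.smul_apply, smul_eq_mul,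
        mul_ite, mul_zero, Pm]
      rw [Finset.sum_ite_eq]
      simp [mul_assoc]
    have hCB : C * B = γ • pm t := by
      ext s s'
      simp only [hB, hC, Matrix.mul_apply, Matrix.of_apply, Matrix.smul_apply, smul_eq_mul,
        ite_mul, zero_mul, pm]
      rw [Fintype.sum_prod_type, Finset.sum_eq_single_of_mem s (Finset.mem_univ s)]
      · simp only [if_pos rfl, Finset.mul_sum]
        exact Finset.sum_congr rfl fun a _ => by rw [if_pos trivial]; ring
      · intro s₁ _ hne
        simp [if_neg hne]
    calc (Mη t).det = ((1 - γ • Pm t)ᵀ).det := by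
          simp only [hMηdef]
          rw [Matrix.transpose_sub, Matrix.transpose_smul, Matrix.transpose_one]
      _ = (1 - γ • Pm t).det := Matrix.det_transpose _
      _ = (1 - B * C).det := by rw [hBC]
      _ = (1 - C * B).det := Matrix.det_one_sub_mul_comm _ _
      _ = (MV t).det := by rw [hCB, hMVdef]
  have h0η : (Mη 0).det ≠ 0 := by rw [hdeteq 0]; exact h0V
  have h1η : (Mη 1).det ≠ 0 := by rw [hdeteq 1]; exact h1V
  have hlη : (Mη l).det ≠ 0 := by rw [hdeteq l]; exact hlV
  obtain ⟨-, hlineη⟩ := key_line Mη fη hη bη βη l hMη hbηline h0η h1η hlη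
  have hηx : ∀ t, ηm t = (Mη t)⁻¹.mulVec (bη t) := by
    intro t
    simp only [ηm, hbηdef, hMηdef]
    rw [Matrix.mulVec_smul]
  refine ⟨?_, ?_, ?_⟩
  · have h1 := haffV l
    simp only [hMVdef] at h1
    exact h1
  · rw [hVx l, hVx 0, hVx 1]
    simp only [hMVdef] at hlineV ⊢
    exact hlineV
  · rw [hηx l, hηx 0, hηx 1]
    rw [hdeteq 1, hdeteq l] at hlineη
    simp only [hMVdef, hMηdef] at hlineη ⊢
    exact hlineη
end

section
/- Consider an MDP with nonempty finite state and action sets S, A, transition kernel α, reward vector r ∈ ℝ^{S×A}, discount factor γ ∈ (0,1) and initial distribution μ ∈ Δ_S, and let R(τ) = Σ_{s,a} r(s,a)·η_γ^{τ,μ}(s,a) denote the expected discounted reward of a policy τ ∈ Δ_A^S. Then: (i) for every τ ∈ Δ_A^S there is a continuous path h : [0,1] → Δ_A^S with h(0) = τ, R(h(1)) = max_{τ' ∈ Δ_A^S} R(τ'), and t ↦ R(h(t)) monotonically nondecreasing; (ii) consequently, for every a ∈ ℝ the superlevel set {τ ∈ Δ_A^S : R(τ) ≥ a} is connected. -/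
open Matrix

namespace Stmt18Aux

variable {n : Type*} [Fintype n] [DecidableEq n]

lemma aux_isUnit {γ : ℝ} (h0 : 0 ≤ γ) (h1 : γ < 1) {M : Matrix n n ℝ}
    (hM0 : ∀ i j, 0 ≤ M i j) (hM1 : ∀ i, ∑ j, M i j = 1) :
    IsUnit (1 - γ • M) := by
  rw [Matrix.isUnit_iff_isUnit_det, isUnit_iff_ne_zero]
  intro hdet
  obtain ⟨v, hv, hMv⟩ := (Matrix.exists_mulVec_eq_zero_iff).2 hdet
  rcases isEmpty_or_nonempty n with hn | hn
  · exact hv (funext fun i => isEmptyElim i)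
  have hveq : ∀ i, v i = γ * ∑ j, M i j * v j := by
    intro i
    have := congrFun hMv i
    rw [Matrix.sub_mulVec, Matrix.one_mulVec, Matrix.smul_mulVec] at this
    have h2 : v i - γ * (M.mulVec v) i = 0 := by simpa using this
    rw [sub_eq_zero] at h2
    rw [h2]
    simp [Matrix.mulVec, dotProduct, Finset.mul_sum]
  obtain ⟨i₀, -, hmax⟩ := Finset.exists_max_image Finset.univ (fun i => |v i|)
    Finset.univ_nonempty
  have hb : |v i₀| ≤ γ * |v i₀| := by
    calc |v i₀| = γ * |∑ j, M i₀ j * v j| := by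
          rw [hveq i₀, abs_mul, abs_of_nonneg h0]
      _ ≤ γ * ∑ j, M i₀ j * |v i₀| := by
          apply mul_le_mul_of_nonneg_left _ h0
          refine (Finset.abs_sum_le_sum_abs _ _).trans ?_
          apply Finset.sum_le_sum
          intro j _
          rw [abs_mul, abs_of_nonneg (hM0 i₀ j)]
          exact mul_le_mul_of_nonneg_left (hmax j (Finset.mem_univ j)) (hM0 i₀ j)
      _ = γ * |v i₀| := by rw [← Finset.sum_mul, hM1 i₀, one_mul]
  have hv0 : |v i₀| = 0 := by nlinarith [abs_nonneg (v i₀)]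
  apply hv
  funext i
  have := (hmax i (Finset.mem_univ i)).trans hv0.le
  simpa using le_antisymm this (abs_nonneg _) |>.symm ▸ abs_eq_zero.mp (le_antisymm this (abs_nonneg _))

lemma aux_inv_nonneg {γ : ℝ} (h0 : 0 ≤ γ) (h1 : γ < 1) {M : Matrix n n ℝ}
    (hM0 : ∀ i j, 0 ≤ M i j) (hM1 : ∀ i, ∑ j, M i j = 1) :
    ∀ i j, 0 ≤ (1 - γ • M)⁻¹ i j := by
  intro i j
  rcases isEmpty_or_nonempty n with hn | hn
  · exact isEmptyElim i
  set G := 1 - γ • M with hG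
  have hunit : IsUnit G.det := (Matrix.isUnit_iff_isUnit_det _).1 (aux_isUnit h0 h1 hM0 hM1)
  set y : n → ℝ := G⁻¹.mulVec (Pi.single j 1) with hy
  have hGy : G.mulVec y = Pi.single j 1 := by
    rw [hy, Matrix.mulVec_mulVec, Matrix.mul_nonsing_inv _ hunit, Matrix.one_mulVec]
  have hyeq : ∀ i, y i = (Pi.single j 1 : n → ℝ) i + γ * ∑ k, M i k * y k := by
    intro i
    have := congrFun hGy i
    rw [hG, Matrix.sub_mulVec, Matrix.one_mulVec, Matrix.smul_mulVec] at this
    have h2 : y i - γ * (M.mulVec y) i = (Pi.single j 1 : n → ℝ) i := by simpa using this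
    rw [← h2]
    simp [Matrix.mulVec, dotProduct]
  obtain ⟨i₀, -, hmin⟩ := Finset.exists_min_image Finset.univ y Finset.univ_nonempty
  have hmin0 : 0 ≤ y i₀ := by
    have := hyeq i₀
    have hb : γ * ∑ k, M i₀ k * y i₀ ≤ γ * ∑ k, M i₀ k * y k := by
      apply mul_le_mul_of_nonneg_left _ h0
      exact Finset.sum_le_sum fun k _ =>
        mul_le_mul_of_nonneg_left (hmin k (Finset.mem_univ k)) (hM0 i₀ k)
    have hc : γ * y i₀ ≤ γ * ∑ k, M i₀ k * y k := by
      rw [← Finset.sum_mul, hM1 i₀, one_mul] at hb; exact hb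
    have hsingle : (0:ℝ) ≤ (Pi.single j 1 : n → ℝ) i₀ := by
      rcases eq_or_ne i₀ j with rfl | h
      · simp
      · simp [Pi.single_apply, h]
    nlinarith
  have : (1 - γ • M)⁻¹ i j = y i := by
    rw [hy, Matrix.mulVec, hG]
    simp [dotProduct, Pi.single_apply]
  rw [this]
  exact le_trans hmin0 (hmin i (Finset.mem_univ i))

end Stmt18Aux

/-- For an MDP with finite nonempty `S, A`, kernel `α`, reward `r`,
`γ ∈ (0,1)` and `μ ∈ Δ_S`, let `R(τ) = ⟨r, η_γ^{τ,μ}⟩` be the expected discounted reward.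
Then (i) for every policy `τ` there is a continuous path `h : [0,1] → Δ_A^S` with
`h(0) = τ`, `R(h(1))` maximal, and `t ↦ R(h(t))` nondecreasing; (ii) consequently each
superlevel set `{τ ∈ Δ_A^S : R(τ) ≥ a}` is connected. -/
theorem stmt18 {S A : Type*} [Fintype S] [Fintype A] [DecidableEq S] [DecidableEq A]
    [Nonempty S] [Nonempty A]
    (α : S → A → S → ℝ) (hα : ∀ s a, (∀ s', 0 ≤ α s a s') ∧ ∑ s', α s a s' = 1)
    (r : S × A → ℝ) (γ : ℝ) (hγ : γ ∈ Set.Ioo (0 : ℝ) 1)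
    (μ : S → ℝ) (hμ : (∀ s, 0 ≤ μ s) ∧ ∑ s, μ s = 1) :
    let Pol : Set (S → A → ℝ) := {τ | ∀ s, (∀ a, 0 ≤ τ s a) ∧ ∑ a, τ s a = 1}
    let R : (S → A → ℝ) → ℝ := fun τ => ∑ x : S × A, r x *
      ((1 - γ) •
        ((1 - γ • (Matrix.of fun x y : S × A => α x.1 x.2 y.1 * τ y.1 y.2)ᵀ)⁻¹).mulVec
          (fun x => μ x.1 * τ x.1 x.2)) x
    (∀ τ ∈ Pol, ∃ h : ℝ → S → A → ℝ,
        ContinuousOn h (Set.Icc 0 1) ∧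
        (∀ t ∈ Set.Icc (0 : ℝ) 1, h t ∈ Pol) ∧
        h 0 = τ ∧
        (∀ τ' ∈ Pol, R τ' ≤ R (h 1)) ∧
        MonotoneOn (fun t => R (h t)) (Set.Icc 0 1)) ∧
    (∀ a : ℝ, IsPreconnected {τ ∈ Pol | a ≤ R τ}) := by
  classical
  intro Pol R
  obtain ⟨hγ0, hγ1⟩ := hγ
  -- basic definitions
  set Mm : (S → A → ℝ) → Matrix (S × A) (S × A) ℝ :=
    fun τ => Matrix.of fun x y : S × A => α x.1 x.2 y.1 * τ y.1 y.2 with hMmdef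
  set G : (S → A → ℝ) → Matrix (S × A) (S × A) ℝ := fun τ => 1 - γ • (Mm τ)ᵀ with hGdef
  set cvec : (S → A → ℝ) → (S × A → ℝ) := fun τ x => μ x.1 * τ x.1 x.2 with hcvecdef
  set ηd : (S → A → ℝ) → (S × A → ℝ) := fun τ => (1 - γ) • (G τ)⁻¹.mulVec (cvec τ) with hηddef
  have hRdef : ∀ τ, R τ = ∑ x, r x * ηd τ x := fun τ => rfl
  have hMrow0 : ∀ τ ∈ Pol, ∀ x y : S × A, 0 ≤ Mm τ x y := by
    intro τ hτ x y
    exact mul_nonneg ((hα x.1 x.2).1 y.1) ((hτ y.1).1 y.2)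
  have hMrow1 : ∀ τ ∈ Pol, ∀ x : S × A, ∑ y, Mm τ x y = 1 := by
    intro τ hτ x
    rw [Fintype.sum_prod_type]
    calc ∑ s' : S, ∑ a' : A, α x.1 x.2 s' * τ s' a'
        = ∑ s' : S, α x.1 x.2 s' * ∑ a' : A, τ s' a' := by
          simp [Finset.mul_sum]
      _ = 1 := by
          simp only [fun s' => (hτ s').2, mul_one]
          exact (hα x.1 x.2).2
  have hGT : ∀ τ, G τ = (1 - γ • Mm τ)ᵀ := by
    intro τ
    rw [hGdef]
    simp [Matrix.transpose_sub, Matrix.transpose_smul]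
  have hGunit : ∀ τ ∈ Pol, IsUnit (G τ).det := by
    intro τ hτ
    have h := Stmt18Aux.aux_isUnit hγ0.le hγ1 (hMrow0 τ hτ) (hMrow1 τ hτ)
    rw [hGT, Matrix.det_transpose]
    exact (Matrix.isUnit_iff_isUnit_det _).1 h
  -- the fundamental linear equation characterizing ηd
  have hE : ∀ (τ : S → A → ℝ) (η' : S × A → ℝ),
      (G τ).mulVec η' = (1 - γ) • cvec τ ↔
      ∀ x : S × A, η' x = τ x.1 x.2 * ((1 - γ) * μ x.1 + γ * ∑ y : S × A, α y.1 y.2 x.1 * η' y) := by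
    intro τ η'
    rw [funext_iff]
    apply forall_congr'
    intro x
    have hlhs : (G τ).mulVec η' x
        = η' x - γ * (τ x.1 x.2 * ∑ y : S × A, α y.1 y.2 x.1 * η' y) := by
      rw [hGdef]
      simp only [Matrix.sub_mulVec, Matrix.one_mulVec, Matrix.smul_mulVec, Pi.sub_apply,
        Pi.smul_apply, smul_eq_mul]
      congr 1
      rw [Finset.mul_sum]
      simp only [Matrix.mulVec, dotProduct, Matrix.transpose_apply, hMmdef, Matrix.of_apply]
      congr 1
      apply Finset.sum_congr rfl
      intro y _
      ring
    rw [hlhs]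
    have hrhs : ((1 - γ) • cvec τ) x = (1 - γ) * (μ x.1 * τ x.1 x.2) := rfl
    rw [hrhs]
    constructor
    · intro h; nlinarith [h]
    · intro h; nlinarith [h]
  have hηd_eq : ∀ τ ∈ Pol, (G τ).mulVec (ηd τ) = (1 - γ) • cvec τ := by
    intro τ hτ
    rw [hηddef]
    simp only
    rw [Matrix.mulVec_smul, Matrix.mulVec_mulVec, Matrix.mul_nonsing_inv _ (hGunit τ hτ),
      Matrix.one_mulVec]
  have huniq : ∀ τ ∈ Pol, ∀ η' : S × A → ℝ,
      (G τ).mulVec η' = (1 - γ) • cvec τ → η' = ηd τ := by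
    intro τ hτ η' hη'
    have h1 : (G τ)⁻¹.mulVec ((G τ).mulVec η') = (G τ)⁻¹.mulVec ((1 - γ) • cvec τ) := by
      rw [hη']
    rw [Matrix.mulVec_mulVec, Matrix.nonsing_inv_mul _ (hGunit τ hτ), Matrix.one_mulVec,
      Matrix.mulVec_smul] at h1
    exact h1
  have hηE : ∀ τ ∈ Pol, ∀ x : S × A,
      ηd τ x = τ x.1 x.2 * ((1 - γ) * μ x.1 + γ * ∑ y : S × A, α y.1 y.2 x.1 * ηd τ y) :=
    fun τ hτ => (hE τ (ηd τ)).1 (hηd_eq τ hτ)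
  -- the "expected frequency" of a state
  set dfun : (S × A → ℝ) → S → ℝ :=
    fun η s => (1 - γ) * μ s + γ * ∑ y : S × A, α y.1 y.2 s * η y with hdfundef
  have hflow_of : ∀ τ ∈ Pol, ∀ s : S, ∑ a : A, ηd τ (s, a) = dfun (ηd τ) s := by
    intro τ hτ s
    calc ∑ a : A, ηd τ (s, a) = ∑ a : A, τ s a * dfun (ηd τ) s := by
          apply Finset.sum_congr rfl
          intro a _
          exact hηE τ hτ (s, a)
      _ = dfun (ηd τ) s := by rw [← Finset.sum_mul, (hτ s).2, one_mul]
  have hηnn : ∀ τ ∈ Pol, ∀ x : S × A, 0 ≤ ηd τ x := by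
    intro τ hτ x
    have hinv : ∀ i j : S × A, 0 ≤ (G τ)⁻¹ i j := by
      intro i j
      have h := Stmt18Aux.aux_inv_nonneg hγ0.le hγ1 (hMrow0 τ hτ) (hMrow1 τ hτ) j i
      rw [hGT, ← Matrix.transpose_nonsing_inv]
      exact h
    rw [hηddef]
    simp only [Pi.smul_apply, smul_eq_mul, Matrix.mulVec, dotProduct]
    apply mul_nonneg (by linarith)
    apply Finset.sum_nonneg
    intro y _
    exact mul_nonneg (hinv x y) (mul_nonneg (hμ.1 y.1) ((hτ y.1).1 y.2))
  -- the polytope of discounted state-action frequencies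
  set D : Set (S × A → ℝ) :=
    {η | (∀ x, 0 ≤ η x) ∧ ∀ s : S, ∑ a : A, η (s, a) = dfun η s} with hDdef
  have hmemD : ∀ τ ∈ Pol, ηd τ ∈ D := fun τ hτ => ⟨hηnn τ hτ, hflow_of τ hτ⟩
  have hDsum : ∀ η ∈ D, ∑ x : S × A, η x = 1 := by
    intro η hη
    have h1 : ∑ x : S × A, η x = ∑ s : S, ∑ a : A, η (s, a) := Fintype.sum_prod_type _
    have h2 : ∑ s : S, dfun η s = (1 - γ) + γ * ∑ x : S × A, η x := by
      rw [hdfundef]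
      simp only
      rw [Finset.sum_add_distrib, ← Finset.mul_sum, ← Finset.mul_sum, hμ.2, mul_one]
      congr 1
      rw [Finset.sum_comm]
      congr 1
      apply Finset.sum_congr rfl
      intro y _
      rw [← Finset.sum_mul, (hα y.1 y.2).2, one_mul]
    have h3 : ∑ x : S × A, η x = (1 - γ) + γ * ∑ x : S × A, η x := by
      calc ∑ x : S × A, η x = ∑ s : S, ∑ a : A, η (s, a) := h1
        _ = ∑ s : S, dfun η s := Finset.sum_congr rfl fun s _ => hη.2 s
        _ = (1 - γ) + γ * ∑ x : S × A, η x := h2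
    have h4 : (1 - γ) * (∑ x : S × A, η x - 1) = 0 := by linear_combination h3
    rcases mul_eq_zero.1 h4 with h5 | h5
    · linarith
    · linarith
  have hzero : ∀ η ∈ D, ∀ s : S, (∑ b : A, η (s, b)) = 0 → ∀ a : A, η (s, a) = 0 := by
    intro η hη s hs a
    have := (Finset.sum_eq_zero_iff_of_nonneg (fun b _ => hη.1 (s, b))).1 hs
    exact this a (Finset.mem_univ a)
  -- the lifting lemma: a consistent policy realizes a feasible η
  have hlift : ∀ τ ∈ Pol, ∀ η ∈ D,
      (∀ x : S × A, η x = τ x.1 x.2 * ∑ b : A, η (x.1, b)) → ηd τ = η := by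
    intro τ hτ η hη hconsist
    refine (huniq τ hτ η ?_).symm
    rw [hE]
    intro x
    rw [hconsist x, hη.2 x.1]
  -- compactness of D and existence of a maximizer
  have hDclosed : IsClosed D := by
    rw [hDdef]
    have heq : {η : S × A → ℝ | (∀ x, 0 ≤ η x) ∧ ∀ s : S, ∑ a : A, η (s, a) = dfun η s}
        = (⋂ x, {η : S × A → ℝ | 0 ≤ η x}) ∩
          ⋂ s, {η : S × A → ℝ | ∑ a : A, η (s, a) = dfun η s} := by
      ext η; simp [Set.mem_iInter, Set.mem_setOf_eq]
    rw [heq]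
    apply IsClosed.inter
    · exact isClosed_iInter fun x => isClosed_le continuous_const (continuous_apply x)
    · refine isClosed_iInter fun s => isClosed_eq (by fun_prop) ?_
      rw [hdfundef]
      fun_prop
  have hDsubIcc : D ⊆ Set.Icc (0 : S × A → ℝ) 1 := by
    intro η hη
    constructor
    · intro x; exact hη.1 x
    · intro x
      calc η x ≤ ∑ y : S × A, η y :=
            Finset.single_le_sum (fun y _ => hη.1 y) (Finset.mem_univ x)
        _ = 1 := hDsum η hη
  have hDcpt : IsCompact D := IsCompact.of_isClosed_subset isCompact_Icc hDclosed hDsubIcc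
  -- a uniform policy, showing D is nonempty
  set τu : S → A → ℝ := fun _ _ => (Fintype.card A : ℝ)⁻¹ with hτudef
  have hcardA : (0 : ℝ) < Fintype.card A := by
    have := Fintype.card_pos (α := A)
    positivity
  have hτuPol : τu ∈ Pol := by
    intro s
    constructor
    · intro a; rw [hτudef]; positivity
    · rw [hτudef]
      simp only [Finset.sum_const, Finset.card_univ, nsmul_eq_mul]
      field_simp
  have hDne : D.Nonempty := ⟨ηd τu, hmemD τu hτuPol⟩
  obtain ⟨η1, hη1D, hη1max'⟩ := hDcpt.exists_isMaxOn hDne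
    (Continuous.continuousOn (by fun_prop : Continuous fun η : S × A → ℝ => ∑ x : S × A, r x * η x))
  have hη1max : ∀ η ∈ D, (∑ x : S × A, r x * η x) ≤ ∑ x : S × A, r x * η1 x :=
    fun η hη => hη1max' hη
  set d1 : S → ℝ := fun s => ∑ b : A, η1 (s, b) with hd1def
  have hd1nn : ∀ s, 0 ≤ d1 s := fun s => Finset.sum_nonneg fun b _ => hη1D.1 (s, b)
  -- a policy realizing the maximizer η1
  set π1 : S → A → ℝ := fun s a => if d1 s = 0 then τu s a else η1 (s, a) / d1 s with hπ1def
  have hπ1Pol : π1 ∈ Pol := by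
    intro s
    rw [hπ1def]
    by_cases hs : d1 s = 0
    · simp only [hs, if_true]; exact hτuPol s
    · simp only [hs, if_false]
      constructor
      · intro a; exact div_nonneg (hη1D.1 (s, a)) (hd1nn s)
      · rw [← Finset.sum_div, show (∑ a : A, η1 (s, a)) = d1 s from rfl, div_self hs]
  have hπ1cons : ∀ x : S × A, η1 x = π1 x.1 x.2 * ∑ b : A, η1 (x.1, b) := by
    intro x
    have hb : π1 x.1 x.2 = if d1 x.1 = 0 then τu x.1 x.2 else η1 x / d1 x.1 := rfl
    rw [hb, show (∑ b : A, η1 (x.1, b)) = d1 x.1 from rfl]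
    by_cases hs : d1 x.1 = 0
    · simp only [hs, if_true, mul_zero]
      exact hzero η1 hη1D x.1 hs x.2
    · simp only [hs, if_false]
      rw [div_mul_cancel₀ _ hs]
  have hπ1η : ηd π1 = η1 := hlift π1 hπ1Pol η1 hη1D hπ1cons
  have hmaxR : ∀ τ' ∈ Pol, (∑ x : S × A, r x * ηd τ' x) ≤ ∑ x : S × A, r x * η1 x :=
    fun τ' hτ' => hη1max _ (hmemD τ' hτ')
  -- the time-reparametrizations
  set q : ℝ → ℝ := fun t => min (max (2 * t - 1) 0) 1 with hqdef
  set p : ℝ → ℝ := fun t => min (max (2 * t) 0) 1 with hpdef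
  have hq0 : q 0 = 0 := by norm_num [hqdef]
  have hq1 : q 1 = 1 := by norm_num [hqdef]
  have hqmem : ∀ t, 0 ≤ q t ∧ q t ≤ 1 :=
    fun t => ⟨le_min (le_max_right _ _) zero_le_one, min_le_right _ _⟩
  have hpmem : ∀ t, 0 ≤ p t ∧ p t ≤ 1 :=
    fun t => ⟨le_min (le_max_right _ _) zero_le_one, min_le_right _ _⟩
  have hp0 : p 0 = 0 := by norm_num [hpdef]
  have hqmono : Monotone q := by
    intro t1 t2 h
    exact min_le_min (max_le_max (by linarith) le_rfl) le_rfl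
  have hqcont : Continuous q := by
    rw [hqdef]; fun_prop
  have hpcont : Continuous p := by
    rw [hpdef]; fun_prop
  have hqp : ∀ t, q t ≠ 0 → p t = 1 := by
    intro t hq
    rcases le_or_gt (2 * t - 1) 0 with h | h
    · exfalso; apply hq; rw [hqdef]; simp only; rw [max_eq_right h]; simp
    · rw [hpdef]; simp only
      rw [max_eq_left (by linarith), min_eq_right (by linarith)]
  -- the key construction
  have key : ∀ τ ∈ Pol, ∃ h : ℝ → S → A → ℝ,
      (∀ s a, Continuous fun t => h t s a) ∧
      (∀ t, h t ∈ Pol) ∧ h 0 = τ ∧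
      (∀ s, d1 s ≠ 0 → ∀ a, h 1 s a = η1 (s, a) / d1 s) ∧
      (∀ t, ∑ x : S × A, r x * ηd (h t) x
        = (1 - q t) * (∑ x : S × A, r x * ηd τ x) + q t * ∑ x : S × A, r x * η1 x) := by
    intro τ hτ
    set η0 : S × A → ℝ := ηd τ with hη0def
    have hη0D : η0 ∈ D := hmemD τ hτ
    set d0 : S → ℝ := fun s => ∑ b : A, η0 (s, b) with hd0def
    have hd0nn : ∀ s, 0 ≤ d0 s := fun s => Finset.sum_nonneg fun b _ => hη0D.1 (s, b)
    have hcons0 : ∀ x : S × A, η0 x = τ x.1 x.2 * d0 x.1 := by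
      intro x
      rw [hη0def]
      rw [show d0 x.1 = dfun (ηd τ) x.1 from by
        rw [hd0def]; exact hflow_of τ hτ x.1]
      exact hηE τ hτ x
    set h : ℝ → S → A → ℝ := fun t s a =>
      if d0 s = 0 then
        (if d1 s = 0 then τ s a else (1 - p t) * τ s a + p t * (η1 (s, a) / d1 s))
      else if d1 s = 0 then τ s a
      else ((1 - q t) * η0 (s, a) + q t * η1 (s, a)) / ((1 - q t) * d0 s + q t * d1 s)
      with hhdef
    have hden : ∀ t s, d0 s ≠ 0 → d1 s ≠ 0 → 0 < (1 - q t) * d0 s + q t * d1 s := by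
      intro t s h0 h1
      have h0' : 0 < d0 s := lt_of_le_of_ne (hd0nn s) (Ne.symm h0)
      have h1' : 0 < d1 s := lt_of_le_of_ne (hd1nn s) (Ne.symm h1)
      obtain ⟨hql, hqu⟩ := hqmem t
      rcases lt_or_eq_of_le hqu with h | h
      · have : 0 < (1 - q t) * d0 s := mul_pos (by linarith) h0'
        nlinarith
      · rw [h]; simpa using h1'
    -- the interpolated frequency vector
    set ηt : ℝ → S × A → ℝ := fun t x => (1 - q t) * η0 x + q t * η1 x with hηtdef
    have hηtD : ∀ t, ηt t ∈ D := by
      intro t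
      obtain ⟨hql, hqu⟩ := hqmem t
      constructor
      · intro x
        exact add_nonneg (mul_nonneg (by linarith) (hη0D.1 x)) (mul_nonneg hql (hη1D.1 x))
      · intro s
        have hsum : ∑ a : A, ηt t (s, a) = (1 - q t) * d0 s + q t * d1 s := by
          rw [hηtdef]
          simp only
          rw [Finset.sum_add_distrib, ← Finset.mul_sum, ← Finset.mul_sum]
        have hflow' : dfun (ηt t) s = (1 - q t) * dfun η0 s + q t * dfun η1 s := by
          rw [hdfundef, hηtdef]
          simp only
          rw [show (∑ y : S × A, α y.1 y.2 s * ((1 - q t) * η0 y + q t * η1 y))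
              = (1 - q t) * (∑ y : S × A, α y.1 y.2 s * η0 y)
                + q t * ∑ y : S × A, α y.1 y.2 s * η1 y from by
            rw [Finset.mul_sum, Finset.mul_sum, ← Finset.sum_add_distrib]
            exact Finset.sum_congr rfl fun y _ => by ring]
          ring
        rw [hsum, hflow', hd0def, hd1def]
        simp only
        rw [hη0D.2 s, hη1D.2 s]
    have hhPol : ∀ t, h t ∈ Pol := by
      intro t s
      obtain ⟨hql, hqu⟩ := hqmem t
      obtain ⟨hpl, hpu⟩ := hpmem t
      have hb : ∀ a, h t s a =
          if d0 s = 0 then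
            (if d1 s = 0 then τ s a else (1 - p t) * τ s a + p t * (η1 (s, a) / d1 s))
          else if d1 s = 0 then τ s a
          else ((1 - q t) * η0 (s, a) + q t * η1 (s, a)) / ((1 - q t) * d0 s + q t * d1 s) :=
        fun a => rfl
      by_cases h0 : d0 s = 0
      · by_cases h1 : d1 s = 0
        · simp only [hb, h0, h1, if_true]; exact hτ s
        · simp only [hb, h0, h1, if_true, if_false]
          constructor
          · intro a
            exact add_nonneg (mul_nonneg (by linarith) ((hτ s).1 a))
              (mul_nonneg hpl (div_nonneg (hη1D.1 (s, a)) (hd1nn s)))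
          · rw [Finset.sum_add_distrib, ← Finset.mul_sum, ← Finset.mul_sum, (hτ s).2,
              ← Finset.sum_div, show (∑ a : A, η1 (s, a)) = d1 s from rfl, div_self h1]
            ring
      · by_cases h1 : d1 s = 0
        · simp only [hb, h0, h1, if_false, if_true]; exact hτ s
        · simp only [hb, h0, h1, if_false]
          have hd := hden t s h0 h1
          constructor
          · intro a
            apply div_nonneg _ hd.le
            exact add_nonneg (mul_nonneg (by linarith) (hη0D.1 (s, a)))
              (mul_nonneg hql (hη1D.1 (s, a)))
          · rw [← Finset.sum_div,
              show (∑ a : A, ((1 - q t) * η0 (s, a) + q t * η1 (s, a)))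
                = (1 - q t) * d0 s + q t * d1 s from by
                rw [Finset.sum_add_distrib, ← Finset.mul_sum, ← Finset.mul_sum]]
            exact div_self hd.ne'
    have hht : ∀ t, ηd (h t) = ηt t := by
      intro t
      apply hlift (h t) (hhPol t) (ηt t) (hηtD t)
      rintro ⟨s, a⟩
      have hsum : ∑ b : A, ηt t (s, b) = (1 - q t) * d0 s + q t * d1 s := by
        rw [hηtdef]
        simp only
        rw [Finset.sum_add_distrib, ← Finset.mul_sum, ← Finset.mul_sum]
      have hb : h t s a =
          if d0 s = 0 then
            (if d1 s = 0 then τ s a else (1 - p t) * τ s a + p t * (η1 (s, a) / d1 s))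
          else if d1 s = 0 then τ s a
          else ((1 - q t) * η0 (s, a) + q t * η1 (s, a)) / ((1 - q t) * d0 s + q t * d1 s) := rfl
      show ηt t (s, a) = h t s a * ∑ b : A, ηt t (s, b)
      rw [hsum, hb, hηtdef]
      simp only
      by_cases h0 : d0 s = 0
      · have hz0 : η0 (s, a) = 0 := hzero η0 hη0D s h0 a
        by_cases h1 : d1 s = 0
        · have hz1 : η1 (s, a) = 0 := hzero η1 hη1D s h1 a
          simp only [h0, h1, if_true]
          rw [hz0, hz1]
          ring
        · simp only [h0, h1, if_true, if_false]
          rw [hz0]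
          by_cases hqt : q t = 0
          · rw [hqt]; ring
          · rw [hqp t hqt]
            field_simp
            ring
      · by_cases h1 : d1 s = 0
        · have hz1 : η1 (s, a) = 0 := hzero η1 hη1D s h1 a
          simp only [h0, h1, if_false, if_true]
          rw [hz1, hcons0 (s, a)]
          ring
        · simp only [h0, h1, if_false]
          rw [div_mul_cancel₀ _ (hden t s h0 h1).ne']
    have hhcont : ∀ s a, Continuous fun t => h t s a := by
      intro s a
      have hb : (fun t => h t s a) = fun t =>
          if d0 s = 0 then
            (if d1 s = 0 then τ s a else (1 - p t) * τ s a + p t * (η1 (s, a) / d1 s))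
          else if d1 s = 0 then τ s a
          else ((1 - q t) * η0 (s, a) + q t * η1 (s, a)) / ((1 - q t) * d0 s + q t * d1 s) := rfl
      rw [hb]
      by_cases h0 : d0 s = 0
      · by_cases h1 : d1 s = 0
        · simp only [h0, h1, if_true]; exact continuous_const
        · simp only [h0, h1, if_true, if_false]
          exact ((continuous_const.sub hpcont).mul continuous_const).add
            (hpcont.mul continuous_const)
      · by_cases h1 : d1 s = 0
        · simp only [h0, h1, if_false, if_true]; exact continuous_const
        · simp only [h0, h1, if_false]
          apply Continuous.div
          · exact ((continuous_const.sub hqcont).mul continuous_const).add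
              (hqcont.mul continuous_const)
          · exact ((continuous_const.sub hqcont).mul continuous_const).add
              (hqcont.mul continuous_const)
          · intro t; exact (hden t s h0 h1).ne'
    have hh0 : h 0 = τ := by
      funext s a
      have hb : h 0 s a =
          if d0 s = 0 then
            (if d1 s = 0 then τ s a else (1 - p 0) * τ s a + p 0 * (η1 (s, a) / d1 s))
          else if d1 s = 0 then τ s a
          else ((1 - q 0) * η0 (s, a) + q 0 * η1 (s, a)) / ((1 - q 0) * d0 s + q 0 * d1 s) := rfl
      rw [hb]
      by_cases h0 : d0 s = 0
      · by_cases h1 : d1 s = 0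
        · simp only [h0, h1, if_true]
        · simp only [h0, h1, if_true, if_false]
          rw [hp0]; ring
      · by_cases h1 : d1 s = 0
        · simp only [h0, h1, if_false, if_true]
        · simp only [h0, h1, if_false]
          rw [hq0, hcons0 (s, a)]
          simp only [sub_zero, one_mul, zero_mul, add_zero]
          exact mul_div_cancel_right₀ _ h0
    have hh1 : ∀ s, d1 s ≠ 0 → ∀ a, h 1 s a = η1 (s, a) / d1 s := by
      intro s h1 a
      have hb : h 1 s a =
          if d0 s = 0 then
            (if d1 s = 0 then τ s a else (1 - p 1) * τ s a + p 1 * (η1 (s, a) / d1 s))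
          else if d1 s = 0 then τ s a
          else ((1 - q 1) * η0 (s, a) + q 1 * η1 (s, a)) / ((1 - q 1) * d0 s + q 1 * d1 s) := rfl
      rw [hb]
      have hp1 : p 1 = 1 := hqp 1 (by rw [hq1]; norm_num)
      by_cases h0 : d0 s = 0
      · simp only [h0, h1, if_true, if_false]
        rw [hp1]; ring
      · simp only [h0, h1, if_false]
        rw [hq1]
        norm_num
    have hRt : ∀ t, ∑ x : S × A, r x * ηd (h t) x
        = (1 - q t) * (∑ x : S × A, r x * η0 x) + q t * ∑ x : S × A, r x * η1 x := by
      intro t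
      rw [hht t, hηtdef]
      simp only
      rw [Finset.mul_sum, Finset.mul_sum, ← Finset.sum_add_distrib]
      exact Finset.sum_congr rfl fun x _ => by ring
    exact ⟨h, hhcont, hhPol, hh0, hh1, hRt⟩
  choose H Hcont HPol H0 H1 HR using key
  constructor
  · -- part (i)
    intro τ hτ
    refine ⟨H τ hτ, ?_, ?_, H0 τ hτ, ?_, ?_⟩
    · exact (continuous_pi fun s => continuous_pi fun b => Hcont τ hτ s b).continuousOn
    · intro t _; exact HPol τ hτ t
    · intro τ' hτ'
      rw [hRdef, hRdef]
      have h1 := HR τ hτ 1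
      rw [hq1] at h1
      rw [h1]
      simp only [sub_self, zero_mul, zero_add, one_mul]
      exact hmaxR τ' hτ'
    · intro t1 ht1 t2 ht2 h12
      show R (H τ hτ t1) ≤ R (H τ hτ t2)
      rw [hRdef, hRdef, HR τ hτ t1, HR τ hτ t2]
      have hq12 : q t1 ≤ q t2 := hqmono h12
      have hc : (∑ x : S × A, r x * ηd τ x) ≤ ∑ x : S × A, r x * η1 x := hmaxR τ hτ
      nlinarith
  · -- part (ii)
    intro a
    by_cases hLne : ({τ ∈ Pol | a ≤ R τ}).Nonempty
    swap
    · rw [Set.not_nonempty_iff_eq_empty] at hLne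
      rw [hLne]
      exact isPreconnected_empty
    obtain ⟨τ₁, hτ₁Pol, hτ₁a⟩ := hLne
    set C : Set (S → A → ℝ) :=
      {π | π ∈ Pol ∧ ∀ s, d1 s ≠ 0 → ∀ b, π s b = η1 (s, b) / d1 s} with hCdef
    have hCconv : Convex ℝ C := by
      intro x hx y hy u v hu hv huv
      have hval : ∀ s b, (u • x + v • y) s b = u * x s b + v * y s b := fun s b => rfl
      constructor
      · intro s
        constructor
        · intro b
          rw [hval s b]
          exact add_nonneg (mul_nonneg hu ((hx.1 s).1 b)) (mul_nonneg hv ((hy.1 s).1 b))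
        · rw [Finset.sum_congr rfl fun b _ => hval s b, Finset.sum_add_distrib,
            ← Finset.mul_sum, ← Finset.mul_sum, (hx.1 s).2, (hy.1 s).2]
          simpa using huv
      · intro s hs b
        rw [hval s b, hx.2 s hs b, hy.2 s hs b]
        linear_combination (η1 (s, b) / d1 s) * huv
    have hCsub : C ⊆ {τ ∈ Pol | a ≤ R τ} := by
      intro π hπ
      have hπη : ηd π = η1 := by
        apply hlift π hπ.1 η1 hη1D
        rintro ⟨s, b⟩
        show η1 (s, b) = π s b * ∑ b' : A, η1 (s, b')
        by_cases hs : d1 s = 0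
        · rw [show (∑ b' : A, η1 (s, b')) = d1 s from rfl, hs, mul_zero]
          exact hzero η1 hη1D s hs b
        · rw [hπ.2 s hs b, show (∑ b' : A, η1 (s, b')) = d1 s from rfl,
            div_mul_cancel₀ _ hs]
      refine ⟨hπ.1, ?_⟩
      rw [hRdef, hπη]
      calc a ≤ R τ₁ := hτ₁a
        _ = ∑ x : S × A, r x * ηd τ₁ x := hRdef τ₁
        _ ≤ ∑ x : S × A, r x * η1 x := hmaxR τ₁ hτ₁Pol
    have hπ1C : π1 ∈ C := by
      refine ⟨hπ1Pol, fun s hs b => ?_⟩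
      show (if d1 s = 0 then τu s b else η1 (s, b) / d1 s) = η1 (s, b) / d1 s
      rw [if_neg hs]
    have hCpre : IsPreconnected C := hCconv.isPreconnected
    set F : Set (Set (S → A → ℝ)) :=
      {B | ∃ τ, ∃ hτ : τ ∈ Pol, a ≤ R τ ∧ B = (fun t => H τ hτ t) '' Set.Icc 0 1 ∪ C}
      with hFdef
    have hmem1 : ∀ B ∈ F, π1 ∈ B := by
      rintro B ⟨τ, hτ, -, rfl⟩
      exact Or.inr hπ1C
    have hpre : ∀ B ∈ F, IsPreconnected B := by
      rintro B ⟨τ, hτ, hk, rfl⟩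
      apply IsPreconnected.union (H τ hτ 1)
      · exact ⟨1, by norm_num, rfl⟩
      · exact ⟨HPol τ hτ 1, fun s hs b => H1 τ hτ s hs b⟩
      · exact isPreconnected_Icc.image _
          (continuous_pi fun s => continuous_pi fun b => Hcont τ hτ s b).continuousOn
      · exact hCpre
    have hUeq : ⋃₀ F = {τ ∈ Pol | a ≤ R τ} := by
      apply Set.Subset.antisymm
      · rintro π ⟨B, ⟨τ, hτ, hk, rfl⟩, hπB⟩
        rcases hπB with ⟨t, ht, rfl⟩ | hπC
        · refine ⟨HPol τ hτ t, ?_⟩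
          rw [hRdef, HR τ hτ t]
          rw [hRdef] at hk
          have h2 := hmaxR τ hτ
          obtain ⟨hql, hqu⟩ := hqmem t
          nlinarith
        · exact hCsub hπC
      · intro π hπ
        refine ⟨(fun t => H π hπ.1 t) '' Set.Icc 0 1 ∪ C, ⟨π, hπ.1, hπ.2, rfl⟩,
          Or.inl ⟨0, by norm_num, H0 π hπ.1⟩⟩
    rw [← hUeq]
    exact isPreconnected_sUnion π1 F hmem1 hpre
end

section
/- Consider an MDP with nonempty finite state and action sets S, A, transition kernel α, reward vector r ∈ ℝ^{S×A}, discount factor γ ∈ (0,1) and initial distribution μ ∈ Δ_S. For a policy τ ∈ Δ_A^S, let r_τ(s) = Σ_a τ(a|s)·r(s,a) and let R_γ^μ(τ) = (1−γ)·μᵀ(I − γ·p_τ)⁻¹ r_τ be the expected discounted reward. Then R_γ^μ(τ) = (1−γ)·det(I − γ·p_τ + r_τ·μᵀ) / det(I − γ·p_τ) − 1 + γ, where r_τ·μᵀ denotes the rank-one matrix with entries r_τ(s)·μ(s'). -/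
open Matrix

lemma det_one_sub_smul_ne_zero {S : Type*} [Fintype S] [DecidableEq S] [Nonempty S]
    (p : Matrix S S ℝ) (hp : ∀ s s', 0 ≤ p s s') (hrow : ∀ s, ∑ s', p s s' = 1)
    (γ : ℝ) (hγ : γ ∈ Set.Ioo (0:ℝ) 1) : ((1 : Matrix S S ℝ) - γ • p).det ≠ 0 := by
  obtain ⟨hγ0, hγ1⟩ := hγ
  apply det_ne_zero_of_sum_row_lt_diag
  intro k
  have hle : p k k ≤ 1 := by
    rw [← hrow k]
    exact Finset.single_le_sum (fun i _ => hp k i) (Finset.mem_univ k)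
  have h1 : ∑ j ∈ Finset.univ.erase k, ‖((1 : Matrix S S ℝ) - γ • p) k j‖
      = γ * (1 - p k k) := by
    have : ∀ j ∈ Finset.univ.erase k, ‖((1 : Matrix S S ℝ) - γ • p) k j‖ = γ * p k j := by
      intro j hj
      have hjk : j ≠ k := Finset.ne_of_mem_erase hj
      simp [Matrix.sub_apply, Matrix.one_apply_ne' hjk, abs_of_nonneg,
        mul_nonneg hγ0.le (hp k j), abs_of_pos hγ0, abs_of_nonneg (hp k j)]
    rw [Finset.sum_congr rfl this, ← Finset.mul_sum,
      Finset.sum_erase_eq_sub (Finset.mem_univ k), hrow k]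
  rw [h1]
  have h2 : ‖((1 : Matrix S S ℝ) - γ • p) k k‖ = 1 - γ * p k k := by
    have : γ * p k k ≤ 1 := le_trans (by nlinarith [hp k k]) le_rfl
    simp [Matrix.sub_apply, Matrix.one_apply_eq, abs_of_nonneg, this,
      sub_nonneg.mpr (by nlinarith [hp k k] : γ * p k k ≤ 1)]
  rw [h2]
  nlinarith [hp k k]

lemma det_add_vecMulVec {S : Type*} [Fintype S] [DecidableEq S] [Nonempty S]
    (M : Matrix S S ℝ) (hM : M.det ≠ 0) (rτ μ : S → ℝ) :
    (M + Matrix.vecMulVec rτ μ).det = M.det * (1 + μ ⬝ᵥ M⁻¹ *ᵥ rτ) := by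
  rw [vecMulVec_eq Unit, det_add_replicateCol_mul_replicateRow (isUnit_iff_ne_zero.mpr hM)]
  congr 1
  rw [det_unique]
  simp only [Matrix.add_apply, Matrix.one_apply_eq, Matrix.mul_apply, Matrix.replicateRow_apply,
    Matrix.replicateCol_apply, Matrix.mulVec, dotProduct, Finset.sum_mul, Finset.mul_sum]
  rw [Finset.sum_comm]
  ring_nf

/-- For an MDP with finite nonempty `S, A`, kernel `α`, reward `r`,
`γ ∈ (0,1)` and `μ ∈ Δ_S`, and a policy `τ` with `r_τ(s) = ∑_a τ(a|s) r(s,a)`, the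
expected discounted reward `R_γ^μ(τ) = (1-γ) μᵀ(I - γ p_τ)⁻¹ r_τ` satisfies
`R_γ^μ(τ) = (1-γ) det(I - γ p_τ + r_τ μᵀ) / det(I - γ p_τ) - 1 + γ`. -/
theorem stmt19 {S A : Type*} [Fintype S] [Fintype A] [DecidableEq S]
    [Nonempty S] [Nonempty A]
    (α : S → A → S → ℝ) (hα : ∀ s a, (∀ s', 0 ≤ α s a s') ∧ ∑ s', α s a s' = 1)
    (r : S × A → ℝ) (γ : ℝ) (hγ : γ ∈ Set.Ioo (0 : ℝ) 1)
    (μ : S → ℝ) (hμ : (∀ s, 0 ≤ μ s) ∧ ∑ s, μ s = 1)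
    (τ : S → A → ℝ) (hτ : ∀ s, (∀ a, 0 ≤ τ s a) ∧ ∑ a, τ s a = 1) :
    let pτ : Matrix S S ℝ := Matrix.of fun s s' => ∑ a, τ s a * α s a s'
    let rτ : S → ℝ := fun s => ∑ a, τ s a * r (s, a)
    (1 - γ) * (μ ⬝ᵥ ((1 - γ • pτ)⁻¹).mulVec rτ) =
      (1 - γ) * (1 - γ • pτ + Matrix.vecMulVec rτ μ).det / (1 - γ • pτ).det - 1 + γ := by
  intro pτ rτ
  have hp : ∀ s s', 0 ≤ pτ s s' := fun s s' =>
    Finset.sum_nonneg fun a _ => mul_nonneg ((hτ s).1 a) ((hα s a).1 s')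
  have hrow : ∀ s, ∑ s', pτ s s' = 1 := by
    intro s
    simp only [pτ, Matrix.of_apply]
    rw [Finset.sum_comm]
    simp only [← Finset.mul_sum]
    calc ∑ a, τ s a * ∑ s', α s a s' = ∑ a, τ s a := by
          refine Finset.sum_congr rfl fun a _ => ?_
          rw [(hα s a).2, mul_one]
      _ = 1 := (hτ s).2
  have hdet : ((1 : Matrix S S ℝ) - γ • pτ).det ≠ 0 :=
    det_one_sub_smul_ne_zero pτ hp hrow γ hγ
  rw [det_add_vecMulVec _ hdet]
  field_simp
  ring
end
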